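/- arXiv:1911.02232 — 4 statements merged into one kernel-verified Lean document; each statement's English description precedes it below -/
import Mathlib

section
/- Let A = (a_ij) be an irreducible quasi-positive n×n real matrix such that every row sum of A is nonpositive (Σ_j a_ij ≤ 0 for every i; equivalently, −Aᵀ is sub-Laplacian), and let Q = diag(q_1, …, q_n) be a real diagonal matrix. Then the function μ ↦ s(μA + Q) is either strictly decreasing on (0, ∞) or constant on (0, ∞). -/
open Matrix Filter

/-- The spectral bound of a real square matrix: the maximum of the real parts of its
complex eigenvalues. -/
noncomputable def specBound {n : ℕ} (M : Matrix (Fin n) (Fin n) ℝ) : ℝ :=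
  sSup (Complex.re '' spectrum ℂ (M.map Complex.ofReal))

/-- The spectral radius of a real square matrix: the maximum of the absolute values of its
complex eigenvalues. -/
noncomputable def specRad {n : ℕ} (M : Matrix (Fin n) (Fin n) ℝ) : ℝ :=
  sSup ((fun z : ℂ => ‖z‖) '' spectrum ℂ (M.map Complex.ofReal))

/-- A matrix is irreducible if for every nonempty proper subset `S` of indices there are
`i ∉ S` and `j ∈ S` with `A i j ≠ 0`. -/
def MatIrreducible {n : ℕ} (A : Matrix (Fin n) (Fin n) ℝ) : Prop :=
  ∀ S : Finset (Fin n), S.Nonempty → S ≠ Finset.univ →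
    ∃ i ∉ S, ∃ j ∈ S, A i j ≠ 0

namespace KarlinAux

variable {n : ℕ}

lemma mem_spec_iff (M : Matrix (Fin n) (Fin n) ℝ) (z : ℂ) :
    z ∈ spectrum ℂ (M.map Complex.ofReal) ↔
      ∃ v : Fin n → ℂ, v ≠ 0 ∧ (M.map Complex.ofReal).mulVec v = z • v := by
  rw [← AlgEquiv.spectrum_eq (Matrix.toLinAlgEquiv' : Matrix (Fin n) (Fin n) ℂ ≃ₐ[ℂ] _),
    ← Module.End.hasEigenvalue_iff_mem_spectrum]
  constructor
  · intro h
    obtain ⟨v, hv, hv0⟩ := h.exists_hasEigenvector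
    refine ⟨v, hv0, ?_⟩
    have := Module.End.mem_eigenspace_iff.mp hv
    simpa [Matrix.toLinAlgEquiv'_apply] using this
  · rintro ⟨v, hv0, hv⟩
    apply Module.End.hasEigenvalue_of_hasEigenvector (x := v)
    refine ⟨Module.End.mem_eigenspace_iff.mpr ?_, hv0⟩
    simpa [Matrix.toLinAlgEquiv'_apply] using hv

lemma spec_nonempty [NeZero n] (M : Matrix (Fin n) (Fin n) ℝ) :
    (spectrum ℂ (M.map Complex.ofReal)).Nonempty := by
  haveI : Nonempty (Fin n) := ⟨⟨0, Nat.pos_of_ne_zero (NeZero.ne n)⟩⟩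
  obtain ⟨c, hc⟩ := Module.End.exists_eigenvalue
    (Matrix.toLinAlgEquiv' ((M.map Complex.ofReal)))
  refine ⟨c, ?_⟩
  rw [← AlgEquiv.spectrum_eq (Matrix.toLinAlgEquiv' : Matrix (Fin n) (Fin n) ℂ ≃ₐ[ℂ] _),
    ← Module.End.hasEigenvalue_iff_mem_spectrum]
  exact hc

/-- A real eigenvalue with a real eigenvector lies in the complex spectrum. -/
lemma real_eig_mem (M : Matrix (Fin n) (Fin n) ℝ) {w : Fin n → ℝ} {s : ℝ}
    (hw : w ≠ 0) (heig : M.mulVec w = s • w) :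
    (s : ℂ) ∈ spectrum ℂ (M.map Complex.ofReal) := by
  rw [mem_spec_iff]
  refine ⟨fun i => (w i : ℂ), ?_, ?_⟩
  · intro h
    apply hw
    funext i
    have := congrFun h i
    simpa using this
  · funext i
    have := congrFun heig i
    simp only [Matrix.mulVec, dotProduct, Matrix.map_apply, Pi.smul_apply,
      smul_eq_mul] at this ⊢
    calc ∑ j, (M i j : ℂ) * (w j : ℂ) = ((∑ j, M i j * w j : ℝ) : ℂ) := by push_cast; rfl
    _ = ((s * w i : ℝ) : ℂ) := by rw [this]
    _ = (s : ℂ) * (w i : ℂ) := by push_cast; rfl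


/-- Collatz–Wielandt type upper bound. -/
lemma re_spec_le (M : Matrix (Fin n) (Fin n) ℝ) (hqp : ∀ i j, i ≠ j → 0 ≤ M i j)
    (x : Fin n → ℝ) (hx : ∀ i, 0 < x i) (t : ℝ) (ht : ∀ i, M.mulVec x i ≤ t * x i)
    {z : ℂ} (hz : z ∈ spectrum ℂ (M.map Complex.ofReal)) : z.re ≤ t := by
  obtain ⟨v, hv0, hv⟩ := (mem_spec_iff M z).mp hz
  set c₀ : ℝ := ∑ i, |M i i| with hc₀
  set B : Fin n → Fin n → ℝ := fun i j => M i j + if i = j then c₀ else 0 with hB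
  have hBnn : ∀ i j, 0 ≤ B i j := by
    intro i j
    by_cases h : i = j
    · subst h
      simp only [hB, if_pos rfl]
      have h1 : |M i i| ≤ c₀ := Finset.single_le_sum (fun k _ => abs_nonneg (M k k))
        (Finset.mem_univ i)
      have := neg_abs_le (M i i)
      simp only [if_true]
      linarith
    · simpa [hB, h] using hqp i j h
  set y : Fin n → ℝ := fun i => ‖v i‖ with hy
  have hynn : ∀ i, 0 ≤ y i := fun i => norm_nonneg _
  obtain ⟨i₁, hi₁⟩ : ∃ i, v i ≠ 0 := by
    by_contra h
    push_neg at h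
    exact hv0 (funext fun i => h i)
  have hy₁ : 0 < y i₁ := by simpa [hy] using norm_pos_iff.mpr hi₁
  have key : ∀ i, ‖z + c₀‖ * y i ≤ ∑ j, B i j * y j := by
    intro i
    have hvi := congrFun hv i
    simp only [Matrix.mulVec, dotProduct, Matrix.map_apply, Pi.smul_apply,
      smul_eq_mul] at hvi
    have h1 : ∑ j, ((B i j : ℝ) : ℂ) * v j = (z + (c₀ : ℂ)) * v i := by
      have hterm : ∀ j, ((B i j : ℝ) : ℂ) * v j
          = (M i j : ℂ) * v j + (if i = j then (c₀ : ℂ) else 0) * v j := by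
        intro j
        by_cases h : i = j <;> simp [hB, h] <;> push_cast <;> ring
      rw [Finset.sum_congr rfl fun j _ => hterm j, Finset.sum_add_distrib]
      simp only [ite_mul, zero_mul, Finset.sum_ite_eq, Finset.mem_univ, if_pos]
      rw [hvi]
      ring
    calc ‖z + c₀‖ * y i = ‖(z + (c₀ : ℂ)) * v i‖ := by
          simp [hy, norm_mul]
    _ = ‖∑ j, ((B i j : ℝ) : ℂ) * v j‖ := by rw [h1]
    _ ≤ ∑ j, ‖((B i j : ℝ) : ℂ) * v j‖ := norm_sum_le _ _
    _ = ∑ j, B i j * y j := by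
          refine Finset.sum_congr rfl fun j _ => ?_
          rw [norm_mul, Complex.norm_real, Real.norm_eq_abs, abs_of_nonneg (hBnn i j)]
  -- maximize the ratio y/x
  obtain ⟨i₀, -, hmax⟩ := Finset.exists_max_image Finset.univ (fun i => y i / x i)
    ⟨i₁, Finset.mem_univ i₁⟩
  set β : ℝ := y i₀ / x i₀ with hβ
  have hble : ∀ j, y j ≤ β * x j := by
    intro j
    have h := hmax j (Finset.mem_univ j)
    calc y j = y j / x j * x j := (div_mul_cancel₀ (y j) (ne_of_gt (hx j))).symm
    _ ≤ β * x j := mul_le_mul_of_nonneg_right h (le_of_lt (hx j))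
  have hβpos : 0 < β :=
    lt_of_lt_of_le (div_pos hy₁ (hx i₁)) (hmax i₁ (Finset.mem_univ i₁))
  have hyi₀ : y i₀ = β * x i₀ := by
    rw [hβ, div_mul_cancel₀ (y i₀) (ne_of_gt (hx i₀))]
  have hyi₀pos : 0 < y i₀ := by rw [hyi₀]; exact mul_pos hβpos (hx i₀)
  have hchain : ‖z + c₀‖ * y i₀ ≤ (t + c₀) * y i₀ := by
    calc ‖z + c₀‖ * y i₀ ≤ ∑ j, B i₀ j * y j := key i₀
    _ ≤ ∑ j, B i₀ j * (β * x j) := by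
        refine Finset.sum_le_sum fun j _ => mul_le_mul_of_nonneg_left (hble j) (hBnn i₀ j)
    _ = β * ∑ j, B i₀ j * x j := by rw [Finset.mul_sum]; exact Finset.sum_congr rfl fun j _ => by ring
    _ = β * (M.mulVec x i₀ + c₀ * x i₀) := by
        congr 1
        simp only [hB, Matrix.mulVec, dotProduct]
        rw [Finset.sum_congr rfl fun j (_ : j ∈ Finset.univ) => (add_mul (M i₀ j) _ (x j)),
          Finset.sum_add_distrib]
        simp [ite_mul, Finset.sum_ite_eq]
    _ ≤ β * ((t + c₀) * x i₀) := by
        refine mul_le_mul_of_nonneg_left ?_ (le_of_lt hβpos)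
        have := ht i₀
        nlinarith [hx i₀]
    _ = (t + c₀) * y i₀ := by rw [hyi₀]; ring
  have habs : ‖z + c₀‖ ≤ t + c₀ := le_of_mul_le_mul_right
    (by linarith [hchain]) hyi₀pos
  have hre : z.re + c₀ ≤ ‖z + c₀‖ := by
    have := Complex.re_le_norm (z + c₀)
    simpa using this
  linarith


lemma bddAbove_re_spec [NeZero n] (M : Matrix (Fin n) (Fin n) ℝ)
    (hqp : ∀ i j, i ≠ j → 0 ≤ M i j) :
    BddAbove (Complex.re '' spectrum ℂ (M.map Complex.ofReal)) := by
  haveI : Nonempty (Fin n) := ⟨⟨0, Nat.pos_of_ne_zero (NeZero.ne n)⟩⟩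
  refine ⟨Finset.univ.sup' Finset.univ_nonempty (fun i => ∑ j, M i j), ?_⟩
  rintro _ ⟨z, hz, rfl⟩
  refine re_spec_le M hqp (fun _ => 1) (fun _ => one_pos) _ (fun i => ?_) hz
  rw [mul_one]
  refine le_trans (le_of_eq ?_) (Finset.le_sup' (fun i => ∑ j, M i j) (Finset.mem_univ i))
  simp [Matrix.mulVec, dotProduct]

lemma specBound_le [NeZero n] (M : Matrix (Fin n) (Fin n) ℝ)
    (hqp : ∀ i j, i ≠ j → 0 ≤ M i j) {x : Fin n → ℝ} {t : ℝ}
    (hx : ∀ i, 0 < x i) (ht : ∀ i, M.mulVec x i ≤ t * x i) : specBound M ≤ t := by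
  refine csSup_le ((spec_nonempty M).image _) ?_
  rintro _ ⟨z, hz, rfl⟩
  exact re_spec_le M hqp x hx t ht hz

lemma le_specBound [NeZero n] (M : Matrix (Fin n) (Fin n) ℝ)
    (hqp : ∀ i j, i ≠ j → 0 ≤ M i j) {w : Fin n → ℝ} {s : ℝ}
    (hw : w ≠ 0) (heig : M.mulVec w = s • w) : s ≤ specBound M := by
  refine le_csSup (bddAbove_re_spec M hqp) ?_
  exact ⟨(s : ℂ), real_eig_mem M hw heig, by simp⟩

/-- Positivity of `(1+B)^k *ᵥ x` for nonneg irreducible `B` and nonneg nonzero `x`. -/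
lemma pow_mulVec_pos (B : Matrix (Fin n) (Fin n) ℝ) (hB : ∀ i j, 0 ≤ B i j)
    (hirr : MatIrreducible B) :
    ∀ (k : ℕ) (x : Fin n → ℝ), (∀ i, 0 ≤ x i) → (∃ i, 0 < x i) →
      (n ≤ k + (Finset.univ.filter (fun i => 0 < x i)).card) →
      ∀ i, 0 < ((1 + B) ^ k).mulVec x i := by
  intro k
  induction k with
  | zero =>
    intro x hx hxp hcard i
    have hall : Finset.univ.filter (fun i => 0 < x i) = Finset.univ := by
      apply Finset.eq_univ_of_card
      refine le_antisymm (le_trans (Finset.card_filter_le _ _) (by simp)) ?_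
      simpa [Fintype.card_fin] using hcard
    have : i ∈ Finset.univ.filter (fun i => 0 < x i) := by rw [hall]; exact Finset.mem_univ i
    simp only [pow_zero, Matrix.one_mulVec]
    exact (Finset.mem_filter.mp this).2
  | succ k ih =>
    intro x hx hxp hcard i
    set y : Fin n → ℝ := x + B.mulVec x with hy
    have hyx : ∀ i, x i ≤ y i := by
      intro i
      have : 0 ≤ B.mulVec x i := by
        simp only [Matrix.mulVec, dotProduct]
        exact Finset.sum_nonneg fun j _ => mul_nonneg (hB i j) (hx j)
      simp only [hy, Pi.add_apply]
      linarith
    have hynn : ∀ i, 0 ≤ y i := fun i => le_trans (hx i) (hyx i)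
    have hsub : Finset.univ.filter (fun i => 0 < x i) ⊆
        Finset.univ.filter (fun i => 0 < y i) := by
      intro i hi
      simp only [Finset.mem_filter, Finset.mem_univ, true_and] at hi ⊢
      exact lt_of_lt_of_le hi (hyx i)
    have hyp : ∃ i, 0 < y i := by
      obtain ⟨i, hi⟩ := hxp
      exact ⟨i, lt_of_lt_of_le hi (hyx i)⟩
    have hstep : ((1 + B) ^ (k + 1)).mulVec x = ((1 + B) ^ k).mulVec y := by
      rw [pow_succ, ← Matrix.mulVec_mulVec]
      congr 1
      rw [Matrix.add_mulVec, Matrix.one_mulVec]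
    rw [hstep]
    -- card condition for y
    have hcard' : n ≤ k + (Finset.univ.filter (fun i => 0 < y i)).card := by
      by_cases hfull : Finset.univ.filter (fun i => 0 < x i) = Finset.univ
      · have : (Finset.univ.filter (fun i => 0 < y i)) = Finset.univ :=
          Finset.eq_univ_of_forall (fun i => by
            refine hsub ?_
            rw [hfull]
            exact Finset.mem_univ i)
        rw [this]
        simp only [Finset.card_univ, Fintype.card_fin]
        omega
      · obtain ⟨i₀, hi₀S, j₀, hj₀S, hBij⟩ := hirr _ (by
          obtain ⟨i, hi⟩ := hxp
          exact ⟨i, Finset.mem_filter.mpr ⟨Finset.mem_univ i, hi⟩⟩) hfull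
        have hxj₀ : 0 < x j₀ := (Finset.mem_filter.mp hj₀S).2
        have hxi₀ : x i₀ = 0 := by
          have : ¬ 0 < x i₀ := fun h => hi₀S (Finset.mem_filter.mpr ⟨Finset.mem_univ _, h⟩)
          linarith [hx i₀]
        have hyi₀ : 0 < y i₀ := by
          have h1 : B i₀ j₀ * x j₀ ≤ B.mulVec x i₀ := by
            simp only [Matrix.mulVec, dotProduct]
            exact Finset.single_le_sum (fun j _ => mul_nonneg (hB i₀ j) (hx j)) (Finset.mem_univ j₀)
          have h2 : 0 < B i₀ j₀ * x j₀ :=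
            mul_pos (lt_of_le_of_ne (hB i₀ j₀) (Ne.symm hBij)) hxj₀
          simp only [hy, Pi.add_apply, hxi₀, zero_add]
          linarith
        have hss : Finset.univ.filter (fun i => 0 < x i) ⊂
            Finset.univ.filter (fun i => 0 < y i) := by
          refine ⟨hsub, fun h => hi₀S (h (Finset.mem_filter.mpr ⟨Finset.mem_univ _, hyi₀⟩))⟩
        have := Finset.card_lt_card hss
        omega
    exact ih y hynn hyp hcard' i


/-- Existence of a positive eigenvector for a nonnegative irreducible matrix. -/
lemma PF_core [NeZero n] (B : Matrix (Fin n) (Fin n) ℝ) (hB : ∀ i j, 0 ≤ B i j)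
    (hirr : MatIrreducible B) :
    ∃ (w : Fin n → ℝ) (r : ℝ), (∀ i, 0 < w i) ∧ B.mulVec w = r • w ∧ 0 ≤ r := by
  haveI : Nonempty (Fin n) := ⟨⟨0, Nat.pos_of_ne_zero (NeZero.ne n)⟩⟩
  have hnpos : 0 < n := Nat.pos_of_ne_zero (NeZero.ne n)
  set P : Set (ℝ × (Fin n → ℝ)) :=
    {p | 0 ≤ p.1 ∧ (∀ i, 0 ≤ p.2 i) ∧ (∑ i, p.2 i) = 1 ∧
      ∀ i, p.1 * p.2 i ≤ B.mulVec p.2 i} with hP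
  -- nonempty
  have hne : P.Nonempty := by
    refine ⟨(0, fun _ => (n : ℝ)⁻¹), le_refl 0, fun i => by positivity, ?_, fun i => ?_⟩
    · simp [Finset.sum_const, Finset.card_univ]
    · simp only [zero_mul]
      simp only [Matrix.mulVec, dotProduct]
      exact Finset.sum_nonneg fun j _ => mul_nonneg (hB _ j) (by positivity)
  -- continuity helpers
  have hc2 : ∀ i, Continuous fun p : ℝ × (Fin n → ℝ) => p.2 i :=
    fun i => (continuous_apply i).comp continuous_snd
  have hcmul : ∀ i, Continuous fun p : ℝ × (Fin n → ℝ) => B.mulVec p.2 i := by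
    intro i
    simp only [Matrix.mulVec, dotProduct]
    exact continuous_finset_sum _ fun j _ => (continuous_const.mul (hc2 j))
  -- closed
  have hclosed : IsClosed P := by
    have h1 : IsClosed {p : ℝ × (Fin n → ℝ) | 0 ≤ p.1} :=
      isClosed_le continuous_const continuous_fst
    have h2 : IsClosed {p : ℝ × (Fin n → ℝ) | ∀ i, 0 ≤ p.2 i} := by
      have : {p : ℝ × (Fin n → ℝ) | ∀ i, 0 ≤ p.2 i} = ⋂ i, {p | 0 ≤ p.2 i} := by
        ext p; simp
      rw [this]
      exact isClosed_iInter fun i => isClosed_le continuous_const (hc2 i)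
    have h3 : IsClosed {p : ℝ × (Fin n → ℝ) | (∑ i, p.2 i) = 1} :=
      isClosed_eq (continuous_finset_sum _ fun i _ => hc2 i) continuous_const
    have h4 : IsClosed {p : ℝ × (Fin n → ℝ) | ∀ i, p.1 * p.2 i ≤ B.mulVec p.2 i} := by
      have : {p : ℝ × (Fin n → ℝ) | ∀ i, p.1 * p.2 i ≤ B.mulVec p.2 i}
          = ⋂ i, {p | p.1 * p.2 i ≤ B.mulVec p.2 i} := by ext p; simp
      rw [this]
      exact isClosed_iInter fun i =>
        isClosed_le (continuous_fst.mul (hc2 i)) (hcmul i)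
    have hPeq : P = {p : ℝ × (Fin n → ℝ) | 0 ≤ p.1} ∩ ({p | ∀ i, 0 ≤ p.2 i} ∩
        ({p | (∑ i, p.2 i) = 1} ∩ {p | ∀ i, p.1 * p.2 i ≤ B.mulVec p.2 i})) := by
      ext p
      simp only [hP, Set.mem_setOf_eq, Set.mem_inter_iff]
    rw [hPeq]
    exact h1.inter (h2.inter (h3.inter h4))
  -- bounded, hence compact
  set C : ℝ := ∑ i, ∑ j, B i j with hC
  have hsub : P ⊆ Set.Icc (0:ℝ) C ×ˢ Set.Icc (0 : Fin n → ℝ) 1 := by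
    rintro ⟨r, x⟩ ⟨hr, hx, hsum, hineq⟩
    have hxle1 : ∀ i, x i ≤ 1 := by
      intro i
      calc x i ≤ ∑ j, x j := Finset.single_le_sum (fun j _ => hx j) (Finset.mem_univ i)
      _ = 1 := hsum
    constructor
    · refine ⟨hr, ?_⟩
      calc r = r * ∑ i, x i := by rw [hsum, mul_one]
      _ = ∑ i, r * x i := by rw [Finset.mul_sum]
      _ ≤ ∑ i, B.mulVec x i := Finset.sum_le_sum fun i _ => hineq i
      _ = ∑ i, ∑ j, B i j * x j := by
          refine Finset.sum_congr rfl fun i _ => ?_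
          simp [Matrix.mulVec, dotProduct]
      _ ≤ ∑ i, ∑ j, B i j := by
          refine Finset.sum_le_sum fun i _ => Finset.sum_le_sum fun j _ => ?_
          calc B i j * x j ≤ B i j * 1 := mul_le_mul_of_nonneg_left (hxle1 j) (hB i j)
          _ = B i j := mul_one _
    · constructor
      · intro i; exact hx i
      · intro i; exact hxle1 i
  have hcomp : IsCompact P :=
    IsCompact.of_isClosed_subset (isCompact_Icc.prod isCompact_Icc) hclosed hsub
  obtain ⟨⟨r, x⟩, hmem, hmax⟩ := hcomp.exists_isMaxOn hne continuous_fst.continuousOn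
  obtain ⟨hr0, hx0, hxsum, hxineq⟩ := hmem
  have hxp : ∃ i, 0 < x i := by
    by_contra h
    push_neg at h
    have : (∑ i, x i) ≤ 0 := Finset.sum_nonpos fun i _ => h i
    rw [hxsum] at this
    linarith
  -- w := (1+B)^(n-1) *ᵥ x is positive
  have hcard1 : 1 ≤ (Finset.univ.filter (fun i => 0 < x i)).card := by
    obtain ⟨i, hi⟩ := hxp
    exact Finset.card_pos.mpr ⟨i, Finset.mem_filter.mpr ⟨Finset.mem_univ i, hi⟩⟩
  set T : Matrix (Fin n) (Fin n) ℝ := (1 + B) ^ (n - 1) with hT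
  set w : Fin n → ℝ := T.mulVec x with hw
  have hwpos : ∀ i, 0 < w i := by
    intro i
    exact pow_mulVec_pos B hB hirr (n-1) x hx0 hxp (by omega) i
  -- T commutes with B
  have hcomm : B * T = T * B := by
    rw [hT]
    exact (Commute.pow_right ((Commute.one_right B).add_right (Commute.refl B)) (n-1)).eq
  refine ⟨w, r, hwpos, ?_, hr0⟩
  -- show B *ᵥ w = r • w
  set y₀ : Fin n → ℝ := B.mulVec x - r • x with hy₀
  have hy₀nn : ∀ i, 0 ≤ y₀ i := by
    intro i
    simp only [hy₀, Pi.sub_apply, Pi.smul_apply, smul_eq_mul, sub_nonneg]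
    exact hxineq i
  have hBw : B.mulVec w - r • w = T.mulVec y₀ := by
    rw [hw, hy₀, Matrix.mulVec_sub, Matrix.mulVec_smul, Matrix.mulVec_mulVec,
      Matrix.mulVec_mulVec, hcomm]
  by_cases hz : y₀ = 0
  · rw [hz] at hBw
    simp only [Matrix.mulVec_zero] at hBw
    have := sub_eq_zero.mp hBw
    exact this
  · exfalso
    have hy₀p : ∃ i, 0 < y₀ i := by
      by_contra h
      push_neg at h
      exact hz (funext fun i => le_antisymm (h i) (hy₀nn i))
    have hcard1' : 1 ≤ (Finset.univ.filter (fun i => 0 < y₀ i)).card := by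
      obtain ⟨i, hi⟩ := hy₀p
      exact Finset.card_pos.mpr ⟨i, Finset.mem_filter.mpr ⟨Finset.mem_univ i, hi⟩⟩
    have hTy₀ : ∀ i, 0 < T.mulVec y₀ i :=
      fun i => pow_mulVec_pos B hB hirr (n-1) y₀ hy₀nn hy₀p (by omega) i
    -- strict inequality r < B w / w
    have hstrict : ∀ i, r * w i < B.mulVec w i := by
      intro i
      have := hTy₀ i
      rw [← hBw] at this
      simp only [Pi.sub_apply, Pi.smul_apply, smul_eq_mul] at this
      linarith
    set ρ : ℝ := Finset.univ.inf' Finset.univ_nonempty (fun i => B.mulVec w i / w i) with hρ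
    have hρgt : r < ρ := by
      rw [hρ, Finset.lt_inf'_iff]
      intro i _
      rw [lt_div_iff₀ (hwpos i)]
      calc r * w i < B.mulVec w i := hstrict i
      _ = B.mulVec w i := rfl
    have hρle : ∀ i, ρ * w i ≤ B.mulVec w i := by
      intro i
      have h1 : ρ ≤ B.mulVec w i / w i := Finset.inf'_le _ (Finset.mem_univ i)
      calc ρ * w i ≤ (B.mulVec w i / w i) * w i :=
        mul_le_mul_of_nonneg_right h1 (le_of_lt (hwpos i))
      _ = B.mulVec w i := div_mul_cancel₀ _ (ne_of_gt (hwpos i))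
    -- normalize w
    set S : ℝ := ∑ i, w i with hS
    have hSpos : 0 < S := Finset.sum_pos (fun i _ => hwpos i) Finset.univ_nonempty
    have hmemρ : (ρ, S⁻¹ • w) ∈ P := by
      refine ⟨le_trans hr0 (le_of_lt hρgt), fun i => ?_, ?_, fun i => ?_⟩
      · simp only [Pi.smul_apply, smul_eq_mul]
        exact mul_nonneg (inv_nonneg.mpr (le_of_lt hSpos)) (le_of_lt (hwpos i))
      · simp only [Pi.smul_apply, smul_eq_mul, ← Finset.mul_sum]
        rw [← hS, inv_mul_cancel₀ (ne_of_gt hSpos)]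
      · rw [Matrix.mulVec_smul]
        simp only [Pi.smul_apply, smul_eq_mul]
        rw [mul_left_comm]
        exact mul_le_mul_of_nonneg_left (hρle i) (inv_nonneg.mpr (le_of_lt hSpos))
    have := hmax hmemρ
    simp only [Set.mem_setOf_eq] at this
    exact absurd this (not_le.mpr hρgt)


lemma matIrreducible_transpose {A : Matrix (Fin n) (Fin n) ℝ} (h : MatIrreducible A) :
    MatIrreducible Aᵀ := by
  intro S hS hSu
  obtain ⟨i, hiS, j, hjS, hij⟩ := h Sᶜ (by
      rw [Finset.nonempty_iff_ne_empty]
      intro hc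
      apply hSu
      have := congrArg (fun s => sᶜ) hc
      simpa using this)
    (by
      intro hc
      have : S = ∅ := by
        have := congrArg (fun s => sᶜ) hc
        simpa using this
      exact hS.ne_empty this)
  refine ⟨j, ?_, i, ?_, ?_⟩
  · intro hjS'
    exact (Finset.mem_compl.mp hjS) hjS'
  · by_contra hiS'
    exact hiS (Finset.mem_compl.mpr hiS')
  · simpa [Matrix.transpose_apply] using hij

lemma spec_transpose (M : Matrix (Fin n) (Fin n) ℝ) :
    spectrum ℂ (Mᵀ.map Complex.ofReal) = spectrum ℂ (M.map Complex.ofReal) := by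
  ext z
  rw [spectrum.mem_iff, spectrum.mem_iff]
  have h1 : (algebraMap ℂ (Matrix (Fin n) (Fin n) ℂ)) z - Mᵀ.map Complex.ofReal
      = ((algebraMap ℂ (Matrix (Fin n) (Fin n) ℂ)) z - M.map Complex.ofReal)ᵀ := by
    rw [Matrix.transpose_sub, Matrix.transpose_map]
    congr 1
    rw [Matrix.algebraMap_eq_diagonal]
    simp [Matrix.diagonal_transpose]
  rw [h1]
  constructor <;> intro h hk <;> apply h
  · rw [Matrix.isUnit_iff_isUnit_det] at hk ⊢
    rwa [Matrix.det_transpose]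
  · rw [Matrix.isUnit_iff_isUnit_det] at hk ⊢
    rwa [Matrix.det_transpose] at hk

/-- The key Donsker–Varadhan style inequality, with equality case. -/
lemma key_ineq (M : Matrix (Fin n) (Fin n) ℝ) (hqp : ∀ i j, i ≠ j → 0 ≤ M i j)
    (u w v : Fin n → ℝ) (hu : ∀ i, 0 < u i) (hw : ∀ i, 0 < w i) (hv : ∀ i, 0 < v i)
    (s : ℝ) (hrw : M.mulVec w = s • w) (hlu : Mᵀ.mulVec u = s • u) :
    s * (∑ i, u i * w i) ≤ ∑ i, u i * w i * (M.mulVec v i / v i) ∧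
    ((∑ i, u i * w i * (M.mulVec v i / v i)) = s * (∑ i, u i * w i) →
      ∀ i j, M i j ≠ 0 → v i * w j = v j * w i) := by
  set d : Fin n → ℝ := fun i => v i / w i with hd
  have hdpos : ∀ i, 0 < d i := fun i => div_pos (hv i) (hw i)
  set T : Fin n → Fin n → ℝ := fun i j => u i * w i * (M i j * v j / v i) with hT
  set E : Fin n → Fin n → ℝ :=
    fun i j => u i * M i j * w j * (1 + Real.log (d j) - Real.log (d i)) with hE
  -- LHS as double sum
  have hLHS : ∑ i, u i * w i * (M.mulVec v i / v i) = ∑ i, ∑ j, T i j := by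
    refine Finset.sum_congr rfl fun i _ => ?_
    simp only [hT, Matrix.mulVec, dotProduct]
    rw [Finset.sum_div, Finset.mul_sum]
  -- pointwise bound
  have hpt : ∀ i j, E i j ≤ T i j := by
    intro i j
    by_cases h : i = j
    · subst h
      apply le_of_eq
      simp only [hT, hE]
      rw [mul_div_assoc, div_self (ne_of_gt (hv i))]
      ring
    · have hc : 0 ≤ u i * M i j * w j :=
        mul_nonneg (mul_nonneg (le_of_lt (hu i)) (hqp i j h)) (le_of_lt (hw j))
      have hTeq : T i j = (u i * M i j * w j) * (d j / d i) := by
        simp only [hT, hd]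
        field_simp [ne_of_gt (hv i), ne_of_gt (hw i), ne_of_gt (hw j)]
      have hdd : d j / d i = Real.exp (Real.log (d j) - Real.log (d i)) := by
        rw [Real.exp_sub, Real.exp_log (hdpos j), Real.exp_log (hdpos i)]
      have hexp : 1 + Real.log (d j) - Real.log (d i)
          ≤ Real.exp (Real.log (d j) - Real.log (d i)) := by
        have := Real.add_one_le_exp (Real.log (d j) - Real.log (d i))
        linarith
      rw [hTeq, hdd]
      calc E i j = (u i * M i j * w j) * (1 + Real.log (d j) - Real.log (d i)) := rfl
      _ ≤ (u i * M i j * w j) * Real.exp (Real.log (d j) - Real.log (d i)) := by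
          apply mul_le_mul_of_nonneg_left _ hc
          exact hexp
  -- sum of E equals s * ∑ u w
  have hrow : ∀ i, ∑ j, M i j * w j = s * w i := by
    intro i
    have := congrFun hrw i
    simpa [Matrix.mulVec, dotProduct] using this
  have hcol : ∀ j, ∑ i, u i * M i j = s * u j := by
    intro j
    have := congrFun hlu j
    simp only [Matrix.mulVec, dotProduct, Matrix.transpose_apply, Pi.smul_apply,
      smul_eq_mul] at this
    rw [← this]
    exact Finset.sum_congr rfl fun i _ => by ring
  have hEsum : ∑ i, ∑ j, E i j = s * (∑ i, u i * w i) := by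
    have hexpand : ∀ i j, E i j = u i * M i j * w j + (u i * M i j * w j) * Real.log (d j)
        - (u i * M i j * w j) * Real.log (d i) := by
      intro i j; simp only [hE]; ring
    have h1 : ∑ i, ∑ j, u i * M i j * w j = s * ∑ i, u i * w i := by
      rw [Finset.mul_sum]
      refine Finset.sum_congr rfl fun i _ => ?_
      calc ∑ j, u i * M i j * w j = u i * ∑ j, M i j * w j := by
            rw [Finset.mul_sum]; exact Finset.sum_congr rfl fun j _ => by ring
      _ = u i * (s * w i) := by rw [hrow i]
      _ = s * (u i * w i) := by ring
    have h2 : ∑ i, ∑ j, (u i * M i j * w j) * Real.log (d j)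
        = ∑ k, s * (u k * w k) * Real.log (d k) := by
      rw [Finset.sum_comm]
      refine Finset.sum_congr rfl fun j _ => ?_
      calc ∑ i, u i * M i j * w j * Real.log (d j)
          = (∑ i, u i * M i j) * (w j * Real.log (d j)) := by
            rw [Finset.sum_mul]; exact Finset.sum_congr rfl fun i _ => by ring
      _ = s * u j * (w j * Real.log (d j)) := by rw [hcol j]
      _ = s * (u j * w j) * Real.log (d j) := by ring
    have h3 : ∑ i, ∑ j, (u i * M i j * w j) * Real.log (d i)
        = ∑ k, s * (u k * w k) * Real.log (d k) := by
      refine Finset.sum_congr rfl fun i _ => ?_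
      calc ∑ j, u i * M i j * w j * Real.log (d i)
          = (∑ j, M i j * w j) * (u i * Real.log (d i)) := by
            rw [Finset.sum_mul]; exact Finset.sum_congr rfl fun j _ => by ring
      _ = s * w i * (u i * Real.log (d i)) := by rw [hrow i]
      _ = s * (u i * w i) * Real.log (d i) := by ring
    calc ∑ i, ∑ j, E i j
        = ∑ i, ∑ j, (u i * M i j * w j + (u i * M i j * w j) * Real.log (d j)
            - (u i * M i j * w j) * Real.log (d i)) := by
          exact Finset.sum_congr rfl fun i _ => Finset.sum_congr rfl fun j _ => hexpand i j
    _ = (∑ i, ∑ j, u i * M i j * w j) + (∑ i, ∑ j, (u i * M i j * w j) * Real.log (d j))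
        - (∑ i, ∑ j, (u i * M i j * w j) * Real.log (d i)) := by
          simp only [Finset.sum_add_distrib, Finset.sum_sub_distrib]
    _ = s * (∑ i, u i * w i) := by rw [h1, h2, h3]; ring
  constructor
  · rw [hLHS, ← hEsum]
    exact Finset.sum_le_sum fun i _ => Finset.sum_le_sum fun j _ => hpt i j
  · intro heq i j hMij
    by_cases hij : i = j
    · subst hij; ring
    -- all pointwise inequalities are equalities
    have hTE : ∀ a b, T a b = E a b := by
      have hsum0 : ∑ a, ∑ b, (T a b - E a b) = 0 := by
        rw [Finset.sum_congr rfl fun a _ => Finset.sum_sub_distrib _ _, Finset.sum_sub_distrib,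
          ← hLHS, heq, hEsum, sub_self]
      have hnn : ∀ a ∈ Finset.univ, 0 ≤ ∑ b, (T a b - E a b) :=
        fun a _ => Finset.sum_nonneg fun b _ => sub_nonneg.mpr (hpt a b)
      have hz1 := (Finset.sum_eq_zero_iff_of_nonneg hnn).mp hsum0
      intro a b
      have hnn2 : ∀ b' ∈ Finset.univ, 0 ≤ T a b' - E a b' :=
        fun b' _ => sub_nonneg.mpr (hpt a b')
      have := (Finset.sum_eq_zero_iff_of_nonneg hnn2).mp (hz1 a (Finset.mem_univ a)) b
        (Finset.mem_univ b)
      linarith [this]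
    -- extract equality for this i j
    have hc : 0 < u i * M i j * w j :=
      mul_pos (mul_pos (hu i) (lt_of_le_of_ne (hqp i j hij) (Ne.symm hMij))) (hw j)
    have hTeq : T i j = (u i * M i j * w j) * (d j / d i) := by
      simp only [hT, hd]
      field_simp [ne_of_gt (hv i), ne_of_gt (hw i), ne_of_gt (hw j)]
    have hdd : d j / d i = Real.exp (Real.log (d j) - Real.log (d i)) := by
      rw [Real.exp_sub, Real.exp_log (hdpos j), Real.exp_log (hdpos i)]
    have heq2 : Real.exp (Real.log (d j) - Real.log (d i))
        = 1 + Real.log (d j) - Real.log (d i) :=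
      mul_left_cancel₀ (ne_of_gt hc) (by rw [← hdd, ← hTeq, hTE i j])
    have ht0 : Real.log (d j) - Real.log (d i) = 0 := by
      by_contra ht
      have := Real.add_one_lt_exp ht
      rw [heq2] at this
      linarith
    have hdij : d j = d i := by
      have : Real.log (d j) = Real.log (d i) := by linarith
      calc d j = Real.exp (Real.log (d j)) := (Real.exp_log (hdpos j)).symm
      _ = Real.exp (Real.log (d i)) := by rw [this]
      _ = d i := Real.exp_log (hdpos i)
    -- conclude v i * w j = v j * w i
    have h5 : v j / w j = v i / w i := hdij
    rw [div_eq_div_iff (ne_of_gt (hw j)) (ne_of_gt (hw i))] at h5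
    linarith [h5]


-- new material starts here

lemma specBound_transpose (M : Matrix (Fin n) (Fin n) ℝ) :
    specBound Mᵀ = specBound M := by
  unfold specBound
  rw [spec_transpose]

/-- Perron–Frobenius: a quasi-positive irreducible matrix has a positive eigenvector
with eigenvalue the spectral bound. -/
lemma exists_pf [NeZero n] (M : Matrix (Fin n) (Fin n) ℝ)
    (hqp : ∀ i j, i ≠ j → 0 ≤ M i j) (hirr : MatIrreducible M) :
    ∃ w : Fin n → ℝ, (∀ i, 0 < w i) ∧ M.mulVec w = specBound M • w := by
  set c₀ : ℝ := ∑ i, |M i i| with hc₀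
  set B : Matrix (Fin n) (Fin n) ℝ := M + c₀ • 1 with hB
  have hBapp : ∀ i j, B i j = M i j + if i = j then c₀ else 0 := by
    intro i j
    simp only [hB, Matrix.add_apply, Matrix.smul_apply, Matrix.one_apply, smul_eq_mul]
    by_cases h : i = j <;> simp [h]
  have hBnn : ∀ i j, 0 ≤ B i j := by
    intro i j
    rw [hBapp]
    by_cases h : i = j
    · subst h
      simp only [if_pos rfl]
      have h1 : |M i i| ≤ c₀ := Finset.single_le_sum (fun k _ => abs_nonneg (M k k))
        (Finset.mem_univ i)
      have := neg_abs_le (M i i)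
      simp only [if_true]
      linarith
    · simpa [h] using hqp i j h
  have hBirr : MatIrreducible B := by
    intro S hS hSu
    obtain ⟨i, hiS, j, hjS, hij⟩ := hirr S hS hSu
    refine ⟨i, hiS, j, hjS, ?_⟩
    have hne : i ≠ j := fun h => hiS (h ▸ hjS)
    rw [hBapp, if_neg hne, add_zero]
    exact hij
  obtain ⟨w, r, hwpos, heig, hr⟩ := PF_core B hBnn hBirr
  have hw0 : w ≠ 0 := by
    intro h
    haveI : Nonempty (Fin n) := ⟨⟨0, Nat.pos_of_ne_zero (NeZero.ne n)⟩⟩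
    obtain ⟨i⟩ := ‹Nonempty (Fin n)›
    have := hwpos i
    rw [h] at this
    simp at this
  have heigM : M.mulVec w = (r - c₀) • w := by
    have hBw : B.mulVec w = M.mulVec w + c₀ • w := by
      rw [hB, Matrix.add_mulVec, Matrix.smul_mulVec, Matrix.one_mulVec]
    rw [hBw] at heig
    funext i
    have := congrFun heig i
    simp only [Pi.add_apply, Pi.smul_apply, smul_eq_mul] at this ⊢
    linarith
  have hspec : specBound M = r - c₀ := by
    refine le_antisymm ?_ ?_
    · refine specBound_le M hqp hwpos (fun i => ?_)
      rw [heigM]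
      simp
    · exact le_specBound M hqp hw0 heigM
  rw [hspec]
  exact ⟨w, hwpos, heigM⟩

section Assembly

variable (A : Matrix (Fin n) (Fin n) ℝ) (q : Fin n → ℝ)

lemma Mμ_apply_ne (μ : ℝ) {i j : Fin n} (h : i ≠ j) :
    (μ • A + Matrix.diagonal q) i j = μ * A i j := by
  simp [Matrix.add_apply, Matrix.smul_apply, Matrix.diagonal_apply_ne _ h]

lemma Mμ_qp (hA_qp : ∀ i j, i ≠ j → 0 ≤ A i j) {μ : ℝ} (hμ : 0 ≤ μ) :
    ∀ i j, i ≠ j → 0 ≤ (μ • A + Matrix.diagonal q) i j := by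
  intro i j h
  rw [Mμ_apply_ne A q μ h]
  exact mul_nonneg hμ (hA_qp i j h)

lemma Mμ_irr (hA_irr : MatIrreducible A) {μ : ℝ} (hμ : μ ≠ 0) :
    MatIrreducible (μ • A + Matrix.diagonal q) := by
  intro S hS hSu
  obtain ⟨i, hiS, j, hjS, hij⟩ := hA_irr S hS hSu
  refine ⟨i, hiS, j, hjS, ?_⟩
  have hne : i ≠ j := fun h => hiS (h ▸ hjS)
  rw [Mμ_apply_ne A q μ hne]
  exact mul_ne_zero hμ hij

lemma Mμ_transpose (μ : ℝ) :
    (μ • A + Matrix.diagonal q)ᵀ = μ • Aᵀ + Matrix.diagonal q := by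
  rw [Matrix.transpose_add, Matrix.transpose_smul, Matrix.diagonal_transpose]

lemma Mμ_mulVec (μ : ℝ) (v : Fin n → ℝ) (i : Fin n) :
    (μ • A + Matrix.diagonal q).mulVec v i = μ * (A.mulVec v) i + q i * v i := by
  rw [Matrix.add_mulVec, Matrix.smul_mulVec]
  simp [Matrix.mulVec_diagonal]

end Assembly


end KarlinAux

/-- For an irreducible quasi-positive matrix `A` with all row sums nonpositive and
`Q = diagonal q`, the map `μ ↦ s(μA + Q)` is either strictly decreasing or constant
on `(0,∞)`. -/



theorem stmt11 {n : ℕ} (A : Matrix (Fin n) (Fin n) ℝ)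
    (hA_qp : ∀ i j, i ≠ j → 0 ≤ A i j)
    (hA_irr : MatIrreducible A)
    (hrow : ∀ i, ∑ j, A i j ≤ 0)
    (q : Fin n → ℝ) :
    StrictAntiOn (fun μ : ℝ => specBound (μ • A + Matrix.diagonal q)) (Set.Ioi 0) ∨
    (∃ c : ℝ, ∀ μ ∈ Set.Ioi (0:ℝ),
      specBound (μ • A + Matrix.diagonal q) = c) := by
  classical
  open KarlinAux in
  by_cases hn : n = 0
  · right
    refine ⟨0, fun μ _ => ?_⟩
    subst hn
    haveI : Subsingleton (Matrix (Fin 0) (Fin 0) ℂ) :=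
      ⟨fun a b => by ext i j; exact i.elim0⟩
    have hsp : spectrum ℂ ((μ • A + Matrix.diagonal q).map Complex.ofReal) = ∅ := by
      ext z
      simp only [Set.mem_empty_iff_false, iff_false]
      intro hz
      exact (spectrum.mem_iff.mp hz) (isUnit_of_subsingleton _)
    unfold specBound
    rw [hsp]
    simp [Real.sSup_empty]
  haveI : NeZero n := ⟨hn⟩
  haveI hFnonempty : Nonempty (Fin n) := ⟨⟨0, Nat.pos_of_ne_zero hn⟩⟩
  set f : ℝ → ℝ := fun μ => specBound (μ • A + Matrix.diagonal q) with hf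
  -- the fundamental inequality
  have main : ∀ μ μ' : ℝ, 0 < μ → 0 < μ' →
      ∀ u' w' : Fin n → ℝ, (∀ i, 0 < u' i) → (∀ i, 0 < w' i) →
      (μ' • A + Matrix.diagonal q).mulVec w' = f μ' • w' →
      ((μ' • A + Matrix.diagonal q)ᵀ).mulVec u' = f μ' • u' →
      f μ' * (∑ i, u' i * w' i) ≤
        (μ'/μ) * (f μ * (∑ i, u' i * w' i) - ∑ i, u' i * w' i * q i)
          + ∑ i, u' i * w' i * q i := by
    intro μ μ' hμ hμ' u' w' hu' hw' hrw' hlu'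
    obtain ⟨wμ, hwμpos, hwμeig⟩ := exists_pf (μ • A + Matrix.diagonal q)
      (Mμ_qp A q hA_qp (le_of_lt hμ)) (Mμ_irr A q hA_irr (ne_of_gt hμ))
    have hkey := (key_ineq (μ' • A + Matrix.diagonal q)
      (Mμ_qp A q hA_qp (le_of_lt hμ')) u' w' wμ hu' hw' hwμpos (f μ') hrw' hlu').1
    have hterm : ∀ i, (μ' • A + Matrix.diagonal q).mulVec wμ i / wμ i
        = μ'/μ * (f μ - q i) + q i := by
      intro i
      have hAv : μ * (A.mulVec wμ) i = (f μ - q i) * wμ i := by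
        have := congrFun hwμeig i
        rw [Mμ_mulVec A q μ wμ i] at this
        simp only [Pi.smul_apply, smul_eq_mul] at this
        linarith
      rw [Mμ_mulVec A q μ' wμ i]
      rw [div_eq_iff (ne_of_gt (hwμpos i))]
      have hAv' : (A.mulVec wμ) i = (f μ - q i) * wμ i / μ := by
        rw [← hAv]
        field_simp
      rw [hAv']
      field_simp
    have hsum : ∑ i, u' i * w' i * ((μ' • A + Matrix.diagonal q).mulVec wμ i / wμ i)
        = (μ'/μ) * (f μ * (∑ i, u' i * w' i) - ∑ i, u' i * w' i * q i)
          + ∑ i, u' i * w' i * q i := by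
      trans (∑ i, (μ'/μ * (f μ * (u' i * w' i) - u' i * w' i * q i) + u' i * w' i * q i))
      · exact Finset.sum_congr rfl fun i _ => by rw [hterm i]; ring
      · rw [Finset.sum_add_distrib]
        congr 1
        rw [← Finset.mul_sum]
        congr 1
        rw [Finset.sum_sub_distrib]
        congr 1
        rw [← Finset.mul_sum]
    rw [hsum] at hkey
    exact hkey
  -- sum identity at v = 1
  have onesum : ∀ (μ'' : ℝ) (u' w' : Fin n → ℝ),
      ∑ i, u' i * w' i * ((μ'' • A + Matrix.diagonal q).mulVec (fun _ => 1) i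
        / (fun _ => (1:ℝ)) i)
      = μ'' * (∑ i, u' i * w' i * (∑ j, A i j)) + ∑ i, u' i * w' i * q i := by
    intro μ'' u' w'
    have hterm : ∀ i, (μ'' • A + Matrix.diagonal q).mulVec (fun _ => 1) i
        / (fun _ => (1:ℝ)) i = μ'' * (∑ j, A i j) + q i := by
      intro i
      have hA1 : (A.mulVec (fun _ => 1)) i = ∑ j, A i j := by
        simp [Matrix.mulVec, dotProduct]
      rw [show ((fun _ => (1:ℝ)) i) = (1:ℝ) from rfl, div_one, Mμ_mulVec A q μ'', hA1,
        mul_one]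
    trans (∑ i, (μ'' * (u' i * w' i * (∑ j, A i j)) + u' i * w' i * q i))
    · exact Finset.sum_congr rfl fun i _ => by rw [hterm i]; ring
    · rw [Finset.sum_add_distrib]
      congr 1
      rw [← Finset.mul_sum]
  -- antitonicity
  have anti : ∀ μ μ'' : ℝ, 0 < μ → μ ≤ μ'' → f μ'' ≤ f μ := by
    intro μ μ'' hμpos hle
    have hμ''pos : 0 < μ'' := lt_of_lt_of_le hμpos hle
    obtain ⟨w', hw'pos, hrw'⟩ := exists_pf (μ'' • A + Matrix.diagonal q)
      (Mμ_qp A q hA_qp (le_of_lt hμ''pos)) (Mμ_irr A q hA_irr (ne_of_gt hμ''pos))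
    obtain ⟨u', hu'pos, hlu'⟩ := exists_pf ((μ'' • A + Matrix.diagonal q)ᵀ)
      (fun i j h => by
        rw [Matrix.transpose_apply]
        exact Mμ_qp A q hA_qp (le_of_lt hμ''pos) j i (Ne.symm h))
      (matIrreducible_transpose (Mμ_irr A q hA_irr (ne_of_gt hμ''pos)))
    rw [specBound_transpose] at hlu'
    have hII := main μ μ'' hμpos hμ''pos u' w' hu'pos hw'pos hrw' hlu'
    have hIII := (key_ineq (μ'' • A + Matrix.diagonal q)
      (Mμ_qp A q hA_qp (le_of_lt hμ''pos)) u' w' (fun _ => 1) hu'pos hw'pos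
      (fun _ => one_pos) (f μ'') hrw' hlu').1
    rw [onesum μ'' u' w'] at hIII
    set W : ℝ := ∑ i, u' i * w' i with hW
    set P : ℝ := ∑ i, u' i * w' i * q i with hP
    set R : ℝ := ∑ i, u' i * w' i * (∑ j, A i j) with hR
    have hWpos : 0 < W := Finset.sum_pos (fun i _ => mul_pos (hu'pos i) (hw'pos i))
      Finset.univ_nonempty
    have hRle : R ≤ 0 := Finset.sum_nonpos fun i _ =>
      mul_nonpos_of_nonneg_of_nonpos (le_of_lt (mul_pos (hu'pos i) (hw'pos i))) (hrow i)
    have hIII' : f μ'' * W ≤ P := by nlinarith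
    have hk : 1 ≤ μ''/μ := (one_le_div hμpos).mpr hle
    rcases le_or_gt P (f μ * W) with h|h
    · have hfin : f μ'' * W ≤ f μ * W := le_trans hIII' h
      exact le_of_mul_le_mul_right hfin hWpos
    · have h2 : (μ''/μ) * (f μ * W - P) ≤ (f μ * W - P) := by nlinarith
      have hfin : f μ'' * W ≤ f μ * W := by linarith
      exact le_of_mul_le_mul_right hfin hWpos
  by_cases hsd : ∀ a ∈ Set.Ioi (0:ℝ), ∀ b ∈ Set.Ioi (0:ℝ), a < b → f b < f a
  · left
    exact fun a ha b hb hab => hsd a ha b hb hab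
  right
  push_neg at hsd
  obtain ⟨μ1, hμ1, μ2, hμ2, h12, hge⟩ := hsd
  rw [Set.mem_Ioi] at hμ1 hμ2
  have heq : f μ2 = f μ1 := le_antisymm (anti μ1 μ2 hμ1 (le_of_lt h12)) hge
  -- PF data at μ2
  obtain ⟨w', hw'pos, hrw'⟩ := exists_pf (μ2 • A + Matrix.diagonal q)
    (Mμ_qp A q hA_qp (le_of_lt hμ2)) (Mμ_irr A q hA_irr (ne_of_gt hμ2))
  obtain ⟨u', hu'pos, hlu'⟩ := exists_pf ((μ2 • A + Matrix.diagonal q)ᵀ)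
    (fun i j h => by
      rw [Matrix.transpose_apply]
      exact Mμ_qp A q hA_qp (le_of_lt hμ2) j i (Ne.symm h))
    (matIrreducible_transpose (Mμ_irr A q hA_irr (ne_of_gt hμ2)))
  rw [specBound_transpose] at hlu'
  have hII := main μ1 μ2 hμ1 hμ2 u' w' hu'pos hw'pos hrw' hlu'
  have hkey1 := key_ineq (μ2 • A + Matrix.diagonal q)
    (Mμ_qp A q hA_qp (le_of_lt hμ2)) u' w' (fun _ => 1) hu'pos hw'pos
    (fun _ => one_pos) (f μ2) hrw' hlu'
  have hIII := hkey1.1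
  rw [onesum μ2 u' w'] at hIII
  set W : ℝ := ∑ i, u' i * w' i with hW
  set P : ℝ := ∑ i, u' i * w' i * q i with hP
  set R : ℝ := ∑ i, u' i * w' i * (∑ j, A i j) with hR
  have hWpos : 0 < W := Finset.sum_pos (fun i _ => mul_pos (hu'pos i) (hw'pos i))
    Finset.univ_nonempty
  have hRle : R ≤ 0 := Finset.sum_nonpos fun i _ =>
    mul_nonpos_of_nonneg_of_nonpos (le_of_lt (mul_pos (hu'pos i) (hw'pos i))) (hrow i)
  have hk : 1 < μ2/μ1 := (one_lt_div hμ1).mpr h12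
  -- deduce P = f μ2 * W
  rw [heq] at hII hIII
  have ht : f μ1 * W - P ≤ 0 := by nlinarith
  have ht0 : f μ1 * W - P = 0 := by nlinarith
  have hPeq : P = f μ1 * W := by linarith
  -- deduce R = 0 and row sums zero
  have hR0 : R = 0 := by nlinarith
  have hrows0 : ∀ i, (∑ j, A i j) = 0 := by
    have hterm0 := (Finset.sum_eq_zero_iff_of_nonpos (fun i (_ : i ∈ Finset.univ) =>
      mul_nonpos_of_nonneg_of_nonpos (le_of_lt (mul_pos (hu'pos i) (hw'pos i)))
        (hrow i))).mp hR0
    intro i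
    have h := hterm0 i (Finset.mem_univ i)
    exact (mul_eq_zero.mp h).resolve_left (ne_of_gt (mul_pos (hu'pos i) (hw'pos i)))
  -- equality case at v = 1
  have honesum : ∑ i, u' i * w' i * ((μ2 • A + Matrix.diagonal q).mulVec (fun _ => 1) i
      / (fun _ => (1:ℝ)) i) = f μ1 * W := by
    rw [onesum μ2 u' w', ← hR, ← hP, hR0, hPeq]
    ring
  have hconn := hkey1.2 (by rw [honesum, heq])
  -- w' is constant
  have i₀ : Fin n := ⟨0, Nat.pos_of_ne_zero hn⟩
  have hconst : ∀ i, w' i = w' i₀ := by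
    set S : Finset (Fin n) := Finset.univ.filter (fun j => w' j = w' i₀) with hS
    have hSuniv : S = Finset.univ := by
      by_contra hSne
      obtain ⟨i, hiS, j, hjS, hij⟩ := hA_irr S
        ⟨i₀, Finset.mem_filter.mpr ⟨Finset.mem_univ i₀, rfl⟩⟩ hSne
      have hne : i ≠ j := fun h => hiS (h ▸ hjS)
      have hM2 : (μ2 • A + Matrix.diagonal q) i j ≠ 0 := by
        rw [Mμ_apply_ne A q μ2 hne]
        exact mul_ne_zero (ne_of_gt hμ2) hij
      have hwij := hconn i j hM2
      simp only [one_mul] at hwij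
      apply hiS
      rw [hS]
      refine Finset.mem_filter.mpr ⟨Finset.mem_univ i, ?_⟩
      rw [← hwij]
      exact (Finset.mem_filter.mp hjS).2
    intro i
    have : i ∈ S := by rw [hSuniv]; exact Finset.mem_univ i
    exact (Finset.mem_filter.mp this).2
  -- q is constant equal to f μ1
  have hqconst : ∀ i, q i = f μ1 := by
    intro i
    have him := congrFun hrw' i
    rw [show specBound (μ2 • A + Matrix.diagonal q) = f μ2 from rfl, heq] at him
    have hlhs : (μ2 • A + Matrix.diagonal q).mulVec w' i = q i * w' i₀ := by
      have hC : ∀ j, (μ2 • A + Matrix.diagonal q) i j * w' j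
          = (μ2 • A + Matrix.diagonal q) i j * w' i₀ := fun j => by rw [hconst j]
      have hsum2 : (μ2 • A + Matrix.diagonal q).mulVec w' i
          = (∑ j, (μ2 • A + Matrix.diagonal q) i j) * w' i₀ := by
        simp only [Matrix.mulVec, dotProduct]
        rw [Finset.sum_congr rfl fun j _ => hC j, ← Finset.sum_mul]
      have hrowsum : (∑ j, (μ2 • A + Matrix.diagonal q) i j) = q i := by
        have : ∀ j, (μ2 • A + Matrix.diagonal q) i j
            = μ2 * A i j + (if i = j then q i else 0) := by
          intro j
          simp [Matrix.add_apply, Matrix.smul_apply, Matrix.diagonal_apply]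
        rw [Finset.sum_congr rfl fun j _ => this j, Finset.sum_add_distrib,
          ← Finset.mul_sum, hrows0 i, mul_zero, zero_add]
        simp
      rw [hsum2, hrowsum]
    rw [hlhs] at him
    simp only [Pi.smul_apply, smul_eq_mul] at him
    rw [hconst i] at him
    exact mul_right_cancel₀ (ne_of_gt (hw'pos i₀)) him
  -- conclude: f is constant
  refine ⟨f μ1, fun μ hμ => ?_⟩
  rw [Set.mem_Ioi] at hμ
  have h1vec : (μ • A + Matrix.diagonal q).mulVec (fun _ => 1) = f μ1 • (fun _ => (1:ℝ)) := by
    funext i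
    rw [Mμ_mulVec A q μ]
    have hA1 : (A.mulVec (fun _ => 1)) i = ∑ j, A i j := by
      simp [Matrix.mulVec, dotProduct]
    rw [hA1, hrows0 i, mul_zero, zero_add, mul_one, hqconst i]
    simp
  have hone_ne : (fun _ => (1:ℝ)) ≠ (0 : Fin n → ℝ) := by
    intro h
    have := congrFun h i₀
    norm_num at this
  refine le_antisymm ?_ ?_
  · refine specBound_le (μ • A + Matrix.diagonal q) (Mμ_qp A q hA_qp (le_of_lt hμ))
      (x := fun _ => (1:ℝ)) (fun _ => one_pos) (fun i => ?_)
    rw [congrFun h1vec i]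
    simp
  · exact le_specBound (μ • A + Matrix.diagonal q) (Mμ_qp A q hA_qp (le_of_lt hμ))
      hone_ne h1vec
end

section
/- Let A be an irreducible quasi-positive n×n real matrix with s(A) < 0, and let Q = diag(q_1, …, q_n) be a real diagonal matrix. Then: (a) the function μ ↦ s(μA + Q) is strictly decreasing on (0, ∞); (b) s(μA + Q) → max_{1≤i≤n} q_i as μ → 0⁺; and (c) s(μA + Q) → −∞ as μ → ∞. -/
open Matrix Filter

namespace PFAux

variable {n : ℕ}

lemma mem_spec_iff {N : Matrix (Fin n) (Fin n) ℂ} {z : ℂ} :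
    z ∈ spectrum ℂ N ↔ ∃ v, v ≠ 0 ∧ N.mulVec v = z • v := by
  rw [← AlgEquiv.spectrum_eq (Matrix.toLinAlgEquiv' (R := ℂ) (n := Fin n)),
    ← Module.End.hasEigenvalue_iff_mem_spectrum]
  constructor
  · intro h
    obtain ⟨v, hv⟩ := h.exists_hasEigenvector
    refine ⟨v, hv.2, ?_⟩
    have := Module.End.mem_eigenspace_iff.1 hv.1
    simpa [Matrix.toLinAlgEquiv'_apply] using this
  · rintro ⟨v, hv0, hv⟩
    exact Module.End.hasEigenvalue_of_hasEigenvector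
      ⟨Module.End.mem_eigenspace_iff.2 (by simpa [Matrix.toLinAlgEquiv'_apply] using hv), hv0⟩

lemma spec_nonempty (hn : 0 < n) (N : Matrix (Fin n) (Fin n) ℂ) :
    (spectrum ℂ N).Nonempty := by
  have : Nontrivial (Fin n → ℂ) := by
    haveI : NeZero n := ⟨hn.ne'⟩
    infer_instance
  obtain ⟨z, hz⟩ := Module.End.exists_eigenvalue (Matrix.toLinAlgEquiv' (R := ℂ) N)
  exact ⟨z, by
    rw [← AlgEquiv.spectrum_eq (Matrix.toLinAlgEquiv' (R := ℂ) (n := Fin n)),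
      ← Module.End.hasEigenvalue_iff_mem_spectrum]
    exact hz⟩


lemma mulVec_nonneg {n : ℕ} {M : Matrix (Fin n) (Fin n) ℝ} (hM : ∀ i j, 0 ≤ M i j)
    {x : Fin n → ℝ} (hx : ∀ i, 0 ≤ x i) (i : Fin n) : 0 ≤ M.mulVec x i := by
  simp only [Matrix.mulVec, dotProduct]
  exact Finset.sum_nonneg fun j _ => mul_nonneg (hM i j) (hx j)

lemma mulVec_mono {n : ℕ} {M : Matrix (Fin n) (Fin n) ℝ} (hM : ∀ i j, 0 ≤ M i j)
    {x y : Fin n → ℝ} (hxy : ∀ j, x j ≤ y j) (i : Fin n) :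
    M.mulVec x i ≤ M.mulVec y i := by
  simp only [Matrix.mulVec, dotProduct]
  exact Finset.sum_le_sum fun j _ => mul_le_mul_of_nonneg_left (hxy j) (hM i j)

lemma mulVec_map_entry {n : ℕ} (M : Matrix (Fin n) (Fin n) ℝ) (v : Fin n → ℂ) (i : Fin n) :
    (M.map Complex.ofReal).mulVec v i = ∑ j, (M i j : ℂ) * v j := by
  simp [Matrix.mulVec, dotProduct, Matrix.map_apply]

lemma abs_mulVec_le {n : ℕ} {B : Matrix (Fin n) (Fin n) ℝ} (hB : ∀ i j, 0 ≤ B i j)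
    {v : Fin n → ℂ} {ζ : ℂ} (h : (B.map Complex.ofReal).mulVec v = ζ • v) (i : Fin n) :
    ‖ζ‖ * ‖v i‖ ≤ B.mulVec (fun j => ‖v j‖) i := by
  have hi : ∑ j, (B i j : ℂ) * v j = ζ * v i := by
    have := congrFun h i
    rwa [mulVec_map_entry] at this
  calc ‖ζ‖ * ‖v i‖ = ‖∑ j, (B i j : ℂ) * v j‖ := by
        rw [hi, norm_mul]
    _ ≤ ∑ j, ‖(B i j : ℂ) * v j‖ := norm_sum_le _ _
    _ = B.mulVec (fun j => ‖v j‖) i := by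
        simp only [Matrix.mulVec, dotProduct]
        refine Finset.sum_congr rfl fun j _ => ?_
        rw [norm_mul, Complex.norm_of_nonneg (hB i j)]

lemma mulVec_map_ofReal {n : ℕ} (M : Matrix (Fin n) (Fin n) ℝ) (u : Fin n → ℝ) :
    (M.map Complex.ofReal).mulVec (fun i => (u i : ℂ)) = fun i => ((M.mulVec u i : ℝ) : ℂ) := by
  funext i
  rw [mulVec_map_entry]
  simp only [Matrix.mulVec, dotProduct]
  push_cast
  rfl

lemma abs_le_of_mem_spec {n : ℕ} {N : Matrix (Fin n) (Fin n) ℂ} {z : ℂ}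
    (hz : z ∈ spectrum ℂ N) : ‖z‖ ≤ ∑ i, ∑ j, ‖N i j‖ := by
  obtain ⟨v, hv0, hveq⟩ := mem_spec_iff.1 hz
  obtain ⟨i0, hvi0'⟩ := Function.ne_iff.1 hv0
  have hvi0 : v i0 ≠ 0 := hvi0'
  have hne : (Finset.univ : Finset (Fin n)).Nonempty := ⟨i0, Finset.mem_univ _⟩
  obtain ⟨i, -, hi⟩ := Finset.exists_max_image Finset.univ (fun i => ‖v i‖) hne
  have hZi : 0 < ‖v i‖ :=
    lt_of_lt_of_le (norm_pos_iff.mpr hvi0) (hi i0 (Finset.mem_univ _))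
  have h1 : ‖z‖ * ‖v i‖ ≤
      (∑ j, ‖N i j‖) * ‖v i‖ := by
    have hvi : ∑ j, N i j * v j = z * v i := by
      have := congrFun hveq i
      simpa [Matrix.mulVec, dotProduct] using this
    calc ‖z‖ * ‖v i‖ = ‖∑ j, N i j * v j‖ := by
          rw [hvi, norm_mul]
      _ ≤ ∑ j, ‖N i j * v j‖ := norm_sum_le _ _
      _ ≤ ∑ j, ‖N i j‖ * ‖v i‖ := by
          refine Finset.sum_le_sum fun j _ => ?_
          rw [norm_mul]
          exact mul_le_mul_of_nonneg_left (hi j (Finset.mem_univ _)) (norm_nonneg _)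
      _ = (∑ j, ‖N i j‖) * ‖v i‖ := by rw [Finset.sum_mul]
  have h2 : ‖z‖ ≤ ∑ j, ‖N i j‖ := le_of_mul_le_mul_right h1 hZi
  refine h2.trans ?_
  exact Finset.single_le_sum (f := fun i => ∑ j, ‖N i j‖)
    (fun k _ => Finset.sum_nonneg fun j _ => norm_nonneg _) (Finset.mem_univ i)

lemma bddAbove_S {n : ℕ} (M : Matrix (Fin n) (Fin n) ℝ) :
    BddAbove (Complex.re '' spectrum ℂ (M.map Complex.ofReal)) := by
  refine ⟨∑ i, ∑ j, ‖(M.map Complex.ofReal) i j‖, ?_⟩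
  rintro y ⟨z, hz, rfl⟩
  exact (Complex.re_le_norm z).trans (abs_le_of_mem_spec hz)


lemma map_add_smul_one {n : ℕ} (M : Matrix (Fin n) (Fin n) ℝ) (c : ℝ) :
    (M + c • (1 : Matrix (Fin n) (Fin n) ℝ)).map Complex.ofReal
      = M.map Complex.ofReal + (c : ℂ) • (1 : Matrix (Fin n) (Fin n) ℂ) := by
  ext i j
  by_cases hij : i = j <;>
    simp [Matrix.map_apply, Matrix.add_apply, Matrix.smul_apply, Matrix.one_apply, hij]

lemma diag_c_nonneg {n : ℕ} (M : Matrix (Fin n) (Fin n) ℝ) (i : Fin n) :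
    0 ≤ M i i + ∑ k, |M k k| := by
  have h1 : |M i i| ≤ ∑ k, |M k k| :=
    Finset.single_le_sum (f := fun k => |M k k|) (fun k _ => abs_nonneg _) (Finset.mem_univ i)
  have h2 : -M i i ≤ |M i i| := neg_le_abs _
  linarith

lemma specBound_le {n : ℕ} (hn : 0 < n) {M : Matrix (Fin n) (Fin n) ℝ}
    (hqp : ∀ i j, i ≠ j → 0 ≤ M i j) {x : Fin n → ℝ} (hx : ∀ i, 0 < x i) {t : ℝ}
    (h : ∀ i, M.mulVec x i ≤ t * x i) : specBound M ≤ t := by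
  haveI : NeZero n := ⟨hn.ne'⟩
  set c := ∑ k, |M k k| with hc
  set B := M + c • (1 : Matrix (Fin n) (Fin n) ℝ) with hBdef
  have hB : ∀ i j, 0 ≤ B i j := by
    intro i j
    by_cases hij : i = j
    · subst hij
      simpa [hBdef, Matrix.add_apply, Matrix.smul_apply, Matrix.one_apply] using
        diag_c_nonneg M i
    · simpa [hBdef, Matrix.add_apply, Matrix.smul_apply, Matrix.one_apply, hij] using
        hqp i j hij
  apply csSup_le ((spec_nonempty hn _).image _)
  rintro y ⟨z, hz, rfl⟩
  obtain ⟨v, hv0, hveq⟩ := mem_spec_iff.1 hz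
  have hBv : (B.map Complex.ofReal).mulVec v = (z + c) • v := by
    rw [hBdef, map_add_smul_one, Matrix.add_mulVec, hveq, Matrix.smul_mulVec,
      Matrix.one_mulVec, add_smul]
  set Z := fun i => ‖v i‖ with hZ
  have habs := abs_mulVec_le hB hBv
  obtain ⟨i0, hvi0'⟩ := Function.ne_iff.1 hv0
  have hvi0 : v i0 ≠ 0 := hvi0'
  have hne : (Finset.univ : Finset (Fin n)).Nonempty := ⟨i0, Finset.mem_univ _⟩
  obtain ⟨i, -, hi⟩ := Finset.exists_max_image Finset.univ (fun i => Z i / x i) hne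
  set m := Z i / x i with hm
  have hm0 : 0 < m := by
    have : 0 < Z i0 / x i0 := div_pos (norm_pos_iff.mpr hvi0) (hx i0)
    exact lt_of_lt_of_le this (hi i0 (Finset.mem_univ _))
  have hZle : ∀ j, Z j ≤ m * x j := fun j =>
    (div_le_iff₀ (hx j)).1 (hi j (Finset.mem_univ _))
  have hZi : Z i = m * x i := (div_mul_cancel₀ _ (hx i).ne').symm
  have hchain : ‖z + c‖ * Z i ≤ (t + c) * Z i := by
    have h1 : ‖z + c‖ * Z i ≤ B.mulVec Z i := habs i
    have h2 : B.mulVec Z i ≤ B.mulVec (fun j => m * x j) i := mulVec_mono hB hZle i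
    have h3 : B.mulVec (fun j => m * x j) i = m * B.mulVec x i := by
      simp only [Matrix.mulVec, dotProduct, Finset.mul_sum]
      exact Finset.sum_congr rfl fun j _ => by ring
    have h4 : B.mulVec x i = M.mulVec x i + c * x i := by
      rw [hBdef, Matrix.add_mulVec]
      simp [Matrix.smul_mulVec, Matrix.one_mulVec]
    have h5 : m * B.mulVec x i ≤ m * ((t + c) * x i) := by
      rw [h4]
      have := h i
      nlinarith [hm0.le, (hx i).le]
    have h6 : m * ((t + c) * x i) = (t + c) * Z i := by rw [hZi]; ring
    linarith
  have hZipos : 0 < Z i := by rw [hZi]; exact mul_pos hm0 (hx i)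
  have habsle : ‖z + c‖ ≤ t + c := le_of_mul_le_mul_right hchain hZipos
  have hre : z.re + c ≤ t + c := by
    have h7 : (z + (c : ℂ)).re ≤ ‖z + c‖ := Complex.re_le_norm _
    have h8 : (z + (c : ℂ)).re = z.re + c := by simp
    linarith
  linarith

lemma spec_shift {n : ℕ} (M : Matrix (Fin n) (Fin n) ℝ) (c : ℝ) :
    spectrum ℂ ((M + c • (1 : Matrix (Fin n) (Fin n) ℝ)).map Complex.ofReal)
      = (fun z => z + (c : ℂ)) '' spectrum ℂ (M.map Complex.ofReal) := by
  ext z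
  constructor
  · intro hz
    obtain ⟨v, hv0, hveq⟩ := mem_spec_iff.1 hz
    rw [map_add_smul_one, Matrix.add_mulVec, Matrix.smul_mulVec,
      Matrix.one_mulVec] at hveq
    refine ⟨z - c, mem_spec_iff.2 ⟨v, hv0, ?_⟩, by ring⟩
    have : (M.map Complex.ofReal).mulVec v = z • v - (c : ℂ) • v := by
      rw [← hveq]; abel
    rw [this, sub_smul]
  · rintro ⟨w, hw, rfl⟩
    obtain ⟨v, hv0, hveq⟩ := mem_spec_iff.1 hw
    refine mem_spec_iff.2 ⟨v, hv0, ?_⟩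
    rw [map_add_smul_one, Matrix.add_mulVec, Matrix.smul_mulVec, Matrix.one_mulVec,
      hveq, add_smul]

lemma sSup_image_add (S : Set ℝ) (hS : S.Nonempty) (hb : BddAbove S) (c : ℝ) :
    sSup ((fun x => x + c) '' S) = sSup S + c := by
  obtain ⟨b, hbb⟩ := hb
  have hbimg : BddAbove ((fun x => x + c) '' S) := by
    refine ⟨b + c, ?_⟩
    rintro y ⟨x, hx, rfl⟩
    exact (by linarith [hbb hx] : x + c ≤ b + c)
  apply le_antisymm
  · apply csSup_le (hS.image _)
    rintro y ⟨x, hx, rfl⟩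
    exact (by linarith [le_csSup ⟨b, hbb⟩ hx] : x + c ≤ sSup S + c)
  · have h1 : sSup S ≤ sSup ((fun x => x + c) '' S) - c := by
      apply csSup_le hS
      intro x hx
      have := le_csSup hbimg ⟨x, hx, rfl⟩
      simp only at this
      linarith
    linarith


lemma specBound_shift {n : ℕ} (hn : 0 < n) (M : Matrix (Fin n) (Fin n) ℝ) (c : ℝ) :
    specBound (M + c • (1 : Matrix (Fin n) (Fin n) ℝ)) = specBound M + c := by
  unfold specBound
  rw [spec_shift]
  rw [show Complex.re '' ((fun z => z + (c : ℂ)) '' spectrum ℂ (M.map Complex.ofReal))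
      = (fun x => x + c) '' (Complex.re '' spectrum ℂ (M.map Complex.ofReal)) by
    rw [← Set.image_comp, ← Set.image_comp]
    exact Set.image_congr fun z _ => by simp]
  exact sSup_image_add _ ((spec_nonempty hn _).image _) (bddAbove_S M) c

lemma entrywise_nonneg_mul {n : ℕ} {P Q : Matrix (Fin n) (Fin n) ℝ}
    (hP : ∀ i j, 0 ≤ P i j) (hQ : ∀ i j, 0 ≤ Q i j) : ∀ i j, 0 ≤ (P * Q) i j := by
  intro i j
  rw [Matrix.mul_apply]
  exact Finset.sum_nonneg fun k _ => mul_nonneg (hP i k) (hQ k j)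

lemma entrywise_nonneg_pow {n : ℕ} {P : Matrix (Fin n) (Fin n) ℝ}
    (hP : ∀ i j, 0 ≤ P i j) (k : ℕ) : ∀ i j, 0 ≤ (P ^ k) i j := by
  induction k with
  | zero =>
    intro i j
    rw [pow_zero]
    by_cases h : i = j <;> simp [Matrix.one_apply, h]
  | succ k ih =>
    intro i j
    rw [pow_succ]
    exact entrywise_nonneg_mul ih hP i j

lemma grow_aux {n : ℕ} {B : Matrix (Fin n) (Fin n) ℝ} (hB : ∀ i j, 0 ≤ B i j)
    (hirr : MatIrreducible B) (k : ℕ) :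
    ∀ x : Fin n → ℝ, (∀ i, 0 ≤ x i) →
      (Finset.univ.filter (fun i => 0 < x i)).Nonempty →
      (∀ i, 0 ≤ ((1 + B) ^ k).mulVec x i) ∧
      min n ((Finset.univ.filter (fun i => 0 < x i)).card + k) ≤
        (Finset.univ.filter (fun i => 0 < ((1 + B) ^ k).mulVec x i)).card := by
  induction k with
  | zero =>
    intro x hx hxne
    rw [pow_zero]
    constructor
    · intro i; rw [Matrix.one_mulVec]; exact hx i
    · rw [Matrix.one_mulVec]
      simpa using min_le_right n ((Finset.univ.filter (fun i => 0 < x i)).card)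
  | succ k ih =>
    intro x hx hxne
    set x' := (1 + B).mulVec x with hx'def
    have hx'entry : ∀ i, x' i = x i + B.mulVec x i := by
      intro i
      rw [hx'def, Matrix.add_mulVec, Matrix.one_mulVec]
      rfl
    have hx' : ∀ i, 0 ≤ x' i := fun i => by
      rw [hx'entry i]
      exact add_nonneg (hx i) (mulVec_nonneg hB hx i)
    have hsub : (Finset.univ.filter (fun i => 0 < x i))
        ⊆ (Finset.univ.filter (fun i => 0 < x' i)) := by
      intro i hi
      rw [Finset.mem_filter] at hi ⊢
      refine ⟨Finset.mem_univ _, ?_⟩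
      rw [hx'entry i]
      have := mulVec_nonneg hB hx i
      linarith [hi.2]
    have hx'ne : (Finset.univ.filter (fun i => 0 < x' i)).Nonempty :=
      hxne.mono hsub
    have hpow : ((1 + B) ^ (k + 1)).mulVec x = ((1 + B) ^ k).mulVec x' := by
      rw [hx'def, Matrix.mulVec_mulVec, ← pow_succ]
    obtain ⟨ih1, ih2⟩ := ih x' hx' hx'ne
    constructor
    · intro i; rw [hpow]; exact ih1 i
    · rw [hpow]
      refine le_trans ?_ ih2
      by_cases huniv : (Finset.univ.filter (fun i => 0 < x i)) = Finset.univ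
      · have h1 : (Finset.univ.filter (fun i => 0 < x' i)) = Finset.univ :=
          Finset.eq_univ_of_forall fun i => hsub (Finset.eq_univ_iff_forall.1 huniv i)
        have h2 : (Finset.univ.filter (fun i => 0 < x' i)).card = n := by
          rw [h1, Finset.card_univ, Fintype.card_fin]
        omega
      · obtain ⟨i, hiS, j, hjS, hBij⟩ := hirr _ hxne huniv
        have hBijpos : 0 < B i j := lt_of_le_of_ne (hB i j) (Ne.symm hBij)
        have hxj : 0 < x j := (Finset.mem_filter.1 hjS).2
        have hsingle : B i j * x j ≤ B.mulVec x i := by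
          simp only [Matrix.mulVec, dotProduct]
          exact Finset.single_le_sum (f := fun k => B i k * x k)
            (fun k _ => mul_nonneg (hB i k) (hx k)) (Finset.mem_univ j)
        have hxi' : 0 < x' i := by
          rw [hx'entry i]
          nlinarith [hx i]
        have hss : (Finset.univ.filter (fun i => 0 < x i))
            ⊂ (Finset.univ.filter (fun i => 0 < x' i)) :=
          (Finset.ssubset_iff_of_subset hsub).2
            ⟨i, Finset.mem_filter.2 ⟨Finset.mem_univ _, hxi'⟩, hiS⟩
        have hcard := Finset.card_lt_card hss
        have hle : (Finset.univ.filter (fun i => 0 < x' i)).card ≤ n := by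
          have := Finset.card_filter_le Finset.univ (fun i => 0 < x' i)
          simpa using this
        omega

lemma grow {n : ℕ} {B : Matrix (Fin n) (Fin n) ℝ} (hB : ∀ i j, 0 ≤ B i j)
    (hirr : MatIrreducible B) {x : Fin n → ℝ} (hx : ∀ i, 0 ≤ x i) (hx0 : x ≠ 0) (i : Fin n) :
    0 < (((1 + B) ^ (n - 1)).mulVec x) i := by
  obtain ⟨i0, hi0'⟩ := Function.ne_iff.1 hx0
  have hi0 : 0 < x i0 := lt_of_le_of_ne (hx i0) (Ne.symm hi0')
  have hn : 0 < n := Fin.pos i0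
  have hxne : (Finset.univ.filter (fun i => 0 < x i)).Nonempty :=
    ⟨i0, Finset.mem_filter.2 ⟨Finset.mem_univ _, hi0⟩⟩
  obtain ⟨-, h2⟩ := grow_aux hB hirr (n - 1) x hx hxne
  have hcard1 : 1 ≤ (Finset.univ.filter (fun i => 0 < x i)).card :=
    Finset.card_pos.2 hxne
  have hle : (Finset.univ.filter (fun i => 0 < ((1 + B) ^ (n - 1)).mulVec x i)).card ≤ n := by
    have := Finset.card_filter_le Finset.univ (fun i => 0 < ((1 + B) ^ (n - 1)).mulVec x i)
    simpa using this
  have hcard : (Finset.univ.filter (fun i => 0 < ((1 + B) ^ (n - 1)).mulVec x i)).card = n := by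
    omega
  have huniv : (Finset.univ.filter (fun i => 0 < ((1 + B) ^ (n - 1)).mulVec x i))
      = Finset.univ := by
    apply Finset.eq_univ_of_card
    rw [hcard, Fintype.card_fin]
  exact (Finset.mem_filter.1 (Finset.eq_univ_iff_forall.1 huniv i)).2


lemma continuous_mulVec {n : ℕ} (M : Matrix (Fin n) (Fin n) ℝ) :
    Continuous (fun x : Fin n → ℝ => M.mulVec x) := by
  refine continuous_pi fun i => ?_
  simp only [Matrix.mulVec, dotProduct]
  exact continuous_finset_sum _ fun j _ => continuous_const.mul (continuous_apply j)

lemma perron {n : ℕ} (hn : 0 < n) {B : Matrix (Fin n) (Fin n) ℝ}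
    (hB : ∀ i j, 0 ≤ B i j) (hirr : MatIrreducible B) :
    ∃ u : Fin n → ℝ, (∀ i, 0 < u i) ∧ B.mulVec u = specBound B • u := by
  haveI : NeZero n := ⟨hn.ne'⟩
  have huneX : (Finset.univ : Finset (Fin n)).Nonempty := Finset.univ_nonempty
  set C := (1 + B) ^ (n - 1) with hCdef
  have hCent : ∀ i j, 0 ≤ C i j := by
    refine entrywise_nonneg_pow (fun i j => ?_) _
    by_cases h : i = j
    · simp only [Matrix.add_apply, Matrix.one_apply, h, if_true, eq_self_iff_true]
      have := hB j j
      norm_num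
      linarith
    · simp only [Matrix.add_apply, Matrix.one_apply, if_neg h, zero_add]
      exact hB i j
  have hcomm : Commute C B := ((Commute.one_left B).add_left (Commute.refl B)).pow_left (n - 1)
  have hgrow : ∀ x : Fin n → ℝ, (∀ i, 0 ≤ x i) → x ≠ 0 → ∀ i, 0 < C.mulVec x i :=
    fun x hx hx0 i => grow hB hirr hx hx0 i
  have hBC : ∀ z : Fin n → ℝ, B.mulVec (C.mulVec z) = C.mulVec (B.mulVec z) := by
    intro z
    rw [Matrix.mulVec_mulVec, Matrix.mulVec_mulVec, ← hcomm.eq]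
  -- the simplex
  set Δ : Set (Fin n → ℝ) := {x | (∀ i, 0 ≤ x i) ∧ ∑ i, x i = 1} with hΔdef
  have hΔne0 : ∀ x ∈ Δ, x ≠ (0 : Fin n → ℝ) := by
    rintro x ⟨-, hsum⟩ rfl
    simp at hsum
  have hΔc : IsCompact Δ := by
    have hclosed : IsClosed Δ := by
      have : Δ = (⋂ i, {x : Fin n → ℝ | 0 ≤ x i}) ∩ {x : Fin n → ℝ | ∑ i, x i = 1} := by
        ext x; simp [hΔdef, Set.mem_iInter]
      rw [this]
      exact IsClosed.inter (isClosed_iInter fun i =>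
          isClosed_le continuous_const (continuous_apply i))
        (isClosed_eq (continuous_finset_sum _ fun i _ => continuous_apply i) continuous_const)
    refine IsCompact.of_isClosed_subset (isCompact_Icc (a := (0 : Fin n → ℝ)) (b := 1))
      hclosed ?_
    rintro x ⟨hx0, hxs⟩
    refine ⟨fun i => hx0 i, fun i => ?_⟩
    have : x i ≤ ∑ j, x j :=
      Finset.single_le_sum (f := fun j => x j) (fun j _ => hx0 j) (Finset.mem_univ i)
    simpa [hxs] using this
  have hΔne : Δ.Nonempty := by
    refine ⟨fun _ => (n : ℝ)⁻¹, fun i => by positivity, ?_⟩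
    simp [Finset.sum_const, nsmul_eq_mul]
  -- the functional
  set F : (Fin n → ℝ) → ℝ := fun x =>
    Finset.univ.inf' huneX (fun i => B.mulVec (C.mulVec x) i / C.mulVec x i) with hFdef
  have hFcont : ContinuousOn F Δ := by
    intro x₀ hx₀
    refine Filter.Tendsto.finset_inf'_nhds_apply huneX fun i _ => ?_
    have hnum : ContinuousWithinAt (fun x => B.mulVec (C.mulVec x) i) Δ x₀ :=
      (((continuous_apply i).comp ((continuous_mulVec B).comp (continuous_mulVec C))).continuousWithinAt)
    have hden : ContinuousWithinAt (fun x => C.mulVec x i) Δ x₀ :=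
      (((continuous_apply i).comp (continuous_mulVec C)).continuousWithinAt)
    exact hnum.div hden (hgrow x₀ hx₀.1 (hΔne0 x₀ hx₀) i).ne'
  obtain ⟨x₀, hx₀Δ, hmax'⟩ := hΔc.exists_isMaxOn hΔne hFcont
  have hmax : ∀ y ∈ Δ, F y ≤ F x₀ := fun y hy => hmax' hy
  set u := C.mulVec x₀ with hudef
  have hu : ∀ i, 0 < u i := hgrow x₀ hx₀Δ.1 (hΔne0 x₀ hx₀Δ)
  set r := F x₀ with hrdef
  have hratio_le : ∀ i, r * u i ≤ B.mulVec u i := by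
    intro i
    have h1 : r ≤ B.mulVec u i / u i := Finset.inf'_le _ (Finset.mem_univ i)
    exact (le_div_iff₀ (hu i)).1 h1
  -- normalization
  have hnorm : ∀ z : Fin n → ℝ, (∀ i, 0 ≤ z i) → z ≠ 0 →
      ∃ y ∈ Δ, ∃ s : ℝ, 0 < s ∧ C.mulVec y = s • C.mulVec z := by
    intro z hz hz0
    set t := ∑ i, z i with htdef
    have ht : 0 < t := by
      obtain ⟨i0, hi0'⟩ := Function.ne_iff.1 hz0
      exact Finset.sum_pos' (fun i _ => hz i)
        ⟨i0, Finset.mem_univ _, lt_of_le_of_ne (hz i0) (Ne.symm hi0')⟩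
    refine ⟨t⁻¹ • z, ⟨fun i => by
      simp only [Pi.smul_apply, smul_eq_mul]
      exact mul_nonneg (inv_nonneg.2 ht.le) (hz i), ?_⟩, t⁻¹, by positivity, ?_⟩
    · simp only [Pi.smul_apply, smul_eq_mul, ← Finset.mul_sum]
      exact inv_mul_cancel₀ ht.ne'
    · rw [Matrix.mulVec_smul]
  have hratio_eq : ∀ (y : Fin n → ℝ) (s : ℝ), 0 < s → ∀ (w : Fin n → ℝ),
      C.mulVec y = s • w → ∀ i, B.mulVec (C.mulVec y) i / C.mulVec y i
        = B.mulVec w i / w i := by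
    intro y s hs w hw i
    rw [hw, Matrix.mulVec_smul]
    simp only [Pi.smul_apply, smul_eq_mul]
    exact mul_div_mul_left _ _ hs.ne'
  -- lower bound characterization
  have hLB : ∀ z : Fin n → ℝ, (∀ i, 0 ≤ z i) → z ≠ 0 → ∀ ρ : ℝ,
      (∀ i, ρ * z i ≤ B.mulVec z i) → ρ ≤ r := by
    intro z hz hz0 ρ hρ
    obtain ⟨y, hyΔ, s, hs, hsy⟩ := hnorm z hz hz0
    set w := C.mulVec z with hwdef
    have hw : ∀ i, 0 < w i := hgrow z hz hz0
    have hBw : ∀ i, ρ * w i ≤ B.mulVec w i := by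
      intro i
      have hlin : B.mulVec w - ρ • w = C.mulVec (B.mulVec z - ρ • z) := by
        rw [Matrix.mulVec_sub, Matrix.mulVec_smul, hwdef, hBC]
      have hpos : 0 ≤ C.mulVec (B.mulVec z - ρ • z) i :=
        mulVec_nonneg hCent (fun j => by
          simp only [Pi.sub_apply, Pi.smul_apply, smul_eq_mul, sub_nonneg]
          exact hρ j) i
      have := congrFun hlin i
      simp only [Pi.sub_apply, Pi.smul_apply, smul_eq_mul] at this
      linarith [hpos, this.symm ▸ hpos]
    have hFy : ρ ≤ F y := by
      rw [hFdef]
      refine Finset.le_inf'_iff _ _ |>.2 fun i _ => ?_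
      rw [hratio_eq y s hs w hsy i]
      exact (le_div_iff₀ (hw i)).2 (hBw i)
    exact hFy.trans (hmax y hyΔ)
  -- u is an eigenvector
  have hune : u ≠ 0 := by
    intro h
    have i0 : Fin n := ⟨0, hn⟩
    exact (hu i0).ne' (congrFun h i0)
  have hBu : B.mulVec u = r • u := by
    by_contra hne
    set y := B.mulVec u - r • u with hydef
    have hyne : y ≠ 0 := sub_ne_zero.2 hne
    have hy0 : ∀ i, 0 ≤ y i := fun i => by
      simp only [hydef, Pi.sub_apply, Pi.smul_apply, smul_eq_mul, sub_nonneg]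
      exact hratio_le i
    set w₂ := C.mulVec u with hw₂def
    have hw₂ : ∀ i, 0 < w₂ i := hgrow u (fun i => (hu i).le) hune
    have hCy : ∀ i, 0 < C.mulVec y i := hgrow y hy0 hyne
    have hstrict : ∀ i, r * w₂ i < B.mulVec w₂ i := by
      intro i
      have hlin : B.mulVec w₂ - r • w₂ = C.mulVec y := by
        rw [hydef, Matrix.mulVec_sub, Matrix.mulVec_smul, hw₂def, hBC]
      have := congrFun hlin i
      simp only [Pi.sub_apply, Pi.smul_apply, smul_eq_mul] at this
      linarith [hCy i]
    obtain ⟨y₂, hy₂Δ, s, hs, hsy⟩ := hnorm u (fun i => (hu i).le) hune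
    have hFy₂ : r < F y₂ := by
      rw [hFdef]
      refine Finset.lt_inf'_iff _ |>.2 fun i _ => ?_
      rw [hratio_eq y₂ s hs w₂ hsy i]
      exact (lt_div_iff₀ (hw₂ i)).2 (hstrict i)
    exact absurd (hmax y₂ hy₂Δ) (not_le.2 hFy₂)
  -- specBound B = r
  have hvne : (fun i => (u i : ℂ)) ≠ 0 := by
    intro h
    have i0 : Fin n := ⟨0, hn⟩
    have := congrFun h i0
    simp only [Pi.zero_apply, Complex.ofReal_eq_zero] at this
    exact (hu i0).ne' this
  have hrspec : ((r : ℝ) : ℂ) ∈ spectrum ℂ (B.map Complex.ofReal) := by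
    refine mem_spec_iff.2 ⟨fun i => (u i : ℂ), hvne, ?_⟩
    rw [mulVec_map_ofReal]
    funext i
    have := congrFun hBu i
    simp only [Pi.smul_apply, smul_eq_mul] at this ⊢
    rw [this]
    push_cast
    ring
  have hub : ∀ w ∈ Complex.re '' spectrum ℂ (B.map Complex.ofReal), w ≤ r := by
    rintro w ⟨z, hz, rfl⟩
    obtain ⟨v, hv0, hveq⟩ := mem_spec_iff.1 hz
    set Z := fun i => ‖v i‖ with hZdef
    have hZ0 : ∀ i, 0 ≤ Z i := fun i => norm_nonneg _
    have hZne : Z ≠ 0 := by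
      obtain ⟨i0, hi0'⟩ := Function.ne_iff.1 hv0
      intro h
      have := congrFun h i0
      simp only [hZdef, Pi.zero_apply, norm_eq_zero] at this
      exact hi0' this
    have habs := abs_mulVec_le hB hveq
    have : ‖z‖ ≤ r := hLB Z hZ0 hZne (‖z‖) habs
    exact (Complex.re_le_norm z).trans this
  have hspec : specBound B = r := by
    unfold specBound
    refine le_antisymm (csSup_le ((spec_nonempty hn _).image _) hub) ?_
    exact le_csSup (bddAbove_S B) ⟨((r : ℝ) : ℂ), hrspec, Complex.ofReal_re r⟩
  exact ⟨u, hu, by rw [hspec]; exact hBu⟩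


lemma perron_qp {n : ℕ} (hn : 0 < n) {M : Matrix (Fin n) (Fin n) ℝ}
    (hqp : ∀ i j, i ≠ j → 0 ≤ M i j) (hirr : MatIrreducible M) :
    ∃ u : Fin n → ℝ, (∀ i, 0 < u i) ∧ M.mulVec u = specBound M • u := by
  set c := ∑ k, |M k k| with hc
  set B := M + c • (1 : Matrix (Fin n) (Fin n) ℝ) with hBdef
  have hB : ∀ i j, 0 ≤ B i j := by
    intro i j
    by_cases hij : i = j
    · subst hij
      simpa [hBdef, Matrix.add_apply, Matrix.smul_apply, Matrix.one_apply] using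
        diag_c_nonneg M i
    · simpa [hBdef, Matrix.add_apply, Matrix.smul_apply, Matrix.one_apply, hij] using
        hqp i j hij
  have hirrB : MatIrreducible B := by
    intro S hS hSu
    obtain ⟨i, hi, j, hj, hij⟩ := hirr S hS hSu
    have hne : i ≠ j := fun h => hi (h ▸ hj)
    refine ⟨i, hi, j, hj, ?_⟩
    simpa [hBdef, Matrix.add_apply, Matrix.smul_apply, Matrix.one_apply, hne] using hij
  obtain ⟨u, hu, hBu⟩ := perron hn hB hirrB
  have hsb : specBound B = specBound M + c := specBound_shift hn M c
  refine ⟨u, hu, ?_⟩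
  have hMu : M.mulVec u = B.mulVec u - c • u := by
    rw [hBdef, Matrix.add_mulVec, Matrix.smul_mulVec, Matrix.one_mulVec]
    abel
  rw [hMu, hBu, hsb, add_smul]
  abel

lemma diag_le_specBound {n : ℕ} (hn : 0 < n) {M : Matrix (Fin n) (Fin n) ℝ}
    (hqp : ∀ i j, i ≠ j → 0 ≤ M i j) (hirr : MatIrreducible M) (i : Fin n) :
    M i i ≤ specBound M := by
  obtain ⟨u, hu, hMu⟩ := perron_qp hn hqp hirr
  have h1 : M.mulVec u i = specBound M * u i := by
    have := congrFun hMu i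
    simpa using this
  have h2 : M i i * u i ≤ M.mulVec u i := by
    simp only [Matrix.mulVec, dotProduct]
    rw [← Finset.sum_erase_add Finset.univ _ (Finset.mem_univ i)]
    have : 0 ≤ ∑ j ∈ Finset.univ.erase i, M i j * u j :=
      Finset.sum_nonneg fun j hj =>
        mul_nonneg (hqp i j (Ne.symm (Finset.ne_of_mem_erase hj))) (hu j).le
    linarith
  have := h1 ▸ h2
  exact le_of_mul_le_mul_right this (hu i)

lemma qp_smul_add_diag {n : ℕ} {A : Matrix (Fin n) (Fin n) ℝ}
    (hqp : ∀ i j, i ≠ j → 0 ≤ A i j) {μ : ℝ} (hμ : 0 ≤ μ) (q : Fin n → ℝ) :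
    ∀ i j, i ≠ j → 0 ≤ (μ • A + Matrix.diagonal q) i j := by
  intro i j hij
  simp only [Matrix.add_apply, Matrix.smul_apply, Matrix.diagonal_apply_ne _ hij, smul_eq_mul,
    add_zero]
  exact mul_nonneg hμ (hqp i j hij)

lemma irr_smul_add_diag {n : ℕ} {A : Matrix (Fin n) (Fin n) ℝ}
    (hirr : MatIrreducible A) {μ : ℝ} (hμ : μ ≠ 0) (q : Fin n → ℝ) :
    MatIrreducible (μ • A + Matrix.diagonal q) := by
  intro S hS hSu
  obtain ⟨i, hi, j, hj, hij⟩ := hirr S hS hSu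
  have hne : i ≠ j := fun h => hi (h ▸ hj)
  refine ⟨i, hi, j, hj, ?_⟩
  simp only [Matrix.add_apply, Matrix.smul_apply, Matrix.diagonal_apply_ne _ hne, smul_eq_mul,
    add_zero]
  exact mul_ne_zero hμ hij

lemma holder_sum {n : ℕ} (c u x : Fin n → ℝ) (hc : ∀ j, 0 ≤ c j) (hu : ∀ j, 0 < u j)
    (hx : ∀ j, 0 < x j) {θ : ℝ} (hθ0 : 0 < θ) (hθ1 : θ < 1) :
    ∑ j, c j * (u j ^ θ * x j ^ (1 - θ))
      ≤ (∑ j, c j * u j) ^ θ * (∑ j, c j * x j) ^ (1 - θ) := by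
  set U := ∑ j, c j * u j with hUdef
  set X := ∑ j, c j * x j with hXdef
  have hU0 : 0 ≤ U := Finset.sum_nonneg fun j _ => mul_nonneg (hc j) (hu j).le
  have hX0 : 0 ≤ X := Finset.sum_nonneg fun j _ => mul_nonneg (hc j) (hx j).le
  rcases eq_or_lt_of_le hU0 with hU | hU
  · have hcz : ∀ j, c j = 0 := by
      intro j
      have hall := (Finset.sum_eq_zero_iff_of_nonneg
        (fun j _ => mul_nonneg (hc j) (hu j).le)).1 hU.symm j (Finset.mem_univ j)
      rcases mul_eq_zero.1 hall with h | h
      · exact h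
      · exact absurd h (hu j).ne'
    have : ∑ j, c j * (u j ^ θ * x j ^ (1 - θ)) = 0 :=
      Finset.sum_eq_zero fun j _ => by rw [hcz j, zero_mul]
    rw [this, ← hU, Real.zero_rpow hθ0.ne']
    rw [zero_mul]
  rcases eq_or_lt_of_le hX0 with hX | hX
  · have hcz : ∀ j, c j = 0 := by
      intro j
      have hall := (Finset.sum_eq_zero_iff_of_nonneg
        (fun j _ => mul_nonneg (hc j) (hx j).le)).1 hX.symm j (Finset.mem_univ j)
      rcases mul_eq_zero.1 hall with h | h
      · exact h
      · exact absurd h (hx j).ne'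
    have : ∑ j, c j * (u j ^ θ * x j ^ (1 - θ)) = 0 :=
      Finset.sum_eq_zero fun j _ => by rw [hcz j, zero_mul]
    rw [this, ← hX, Real.zero_rpow (by linarith : (1:ℝ) - θ ≠ 0)]
    rw [mul_zero]
  set K := U ^ θ * X ^ (1 - θ) with hKdef
  have hK0 : 0 ≤ K := mul_nonneg (Real.rpow_nonneg hU0 _) (Real.rpow_nonneg hX0 _)
  have step : ∀ j, u j ^ θ * x j ^ (1 - θ)
      ≤ K * (θ * (u j / U) + (1 - θ) * (x j / X)) := by
    intro j
    have h1 : u j ^ θ = U ^ θ * (u j / U) ^ θ := by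
      rw [← Real.mul_rpow hU0 (div_nonneg (hu j).le hU0), mul_div_cancel₀ _ hU.ne']
    have h2 : x j ^ (1 - θ) = X ^ (1 - θ) * (x j / X) ^ (1 - θ) := by
      rw [← Real.mul_rpow hX0 (div_nonneg (hx j).le hX0), mul_div_cancel₀ _ hX.ne']
    rw [h1, h2]
    have h3 : (u j / U) ^ θ * (x j / X) ^ (1 - θ)
        ≤ θ * (u j / U) + (1 - θ) * (x j / X) :=
      Real.geom_mean_le_arith_mean2_weighted hθ0.le (by linarith)
        (div_nonneg (hu j).le hU0) (div_nonneg (hx j).le hX0) (by ring)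
    calc U ^ θ * (u j / U) ^ θ * (X ^ (1 - θ) * (x j / X) ^ (1 - θ))
        = K * ((u j / U) ^ θ * (x j / X) ^ (1 - θ)) := by rw [hKdef]; ring
      _ ≤ K * (θ * (u j / U) + (1 - θ) * (x j / X)) :=
          mul_le_mul_of_nonneg_left h3 hK0
  calc ∑ j, c j * (u j ^ θ * x j ^ (1 - θ))
      ≤ ∑ j, c j * (K * (θ * (u j / U) + (1 - θ) * (x j / X))) :=
        Finset.sum_le_sum fun j _ => mul_le_mul_of_nonneg_left (step j) (hc j)
    _ = K * θ / U * (∑ j, c j * u j) + K * (1 - θ) / X * (∑ j, c j * x j) := by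
        rw [Finset.mul_sum, Finset.mul_sum, ← Finset.sum_add_distrib]
        refine Finset.sum_congr rfl fun j _ => ?_
        field_simp
    _ = K := by
        rw [← hUdef, ← hXdef]
        field_simp
        ring


lemma smul_add_diag_mulVec {n : ℕ} (A : Matrix (Fin n) (Fin n) ℝ) (q : Fin n → ℝ) (μ : ℝ)
    (v : Fin n → ℝ) (i : Fin n) :
    (μ • A + Matrix.diagonal q).mulVec v i = μ * A.mulVec v i + q i * v i := by
  rw [Matrix.add_mulVec, Matrix.smul_mulVec]
  simp [Matrix.mulVec_diagonal]

lemma key {n : ℕ} (hn : 0 < n) {A : Matrix (Fin n) (Fin n) ℝ}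
    (hA_qp : ∀ i j, i ≠ j → 0 ≤ A i j) (hA_irr : MatIrreducible A)
    {x : Fin n → ℝ} (hx : ∀ i, 0 < x i) {δ : ℝ} (hδ : 0 < δ)
    (hAx : ∀ i, A.mulVec x i ≤ -δ * x i) (q : Fin n → ℝ)
    {μ₁ μ₂ : ℝ} (h1 : 0 < μ₁) (h12 : μ₁ < μ₂)
    (hs1 : specBound (μ₁ • A + Matrix.diagonal q) ≤ 0) :
    specBound (μ₂ • A + Matrix.diagonal q) < 0 := by
  have h2 : 0 < μ₂ := h1.trans h12
  obtain ⟨u, hu, hMu⟩ := perron_qp hn (qp_smul_add_diag hA_qp h1.le q)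
    (irr_smul_add_diag hA_irr h1.ne' q)
  have hAu : ∀ i, μ₁ * A.mulVec u i ≤ -(q i * u i) := by
    intro i
    have heq := congrFun hMu i
    rw [smul_add_diag_mulVec] at heq
    have hle : specBound (μ₁ • A + Matrix.diagonal q) * u i ≤ 0 :=
      mul_nonpos_of_nonpos_of_nonneg hs1 (hu i).le
    simp only [Pi.smul_apply, smul_eq_mul] at heq
    linarith [heq ▸ hle]
  obtain ⟨c, hcterm, hcδ⟩ : ∃ c : ℝ, (∀ i, |A i i| + |q i| / μ₁ ≤ c) ∧ δ ≤ c := by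
    refine ⟨δ + ∑ i, (|A i i| + |q i| / μ₁), fun i => ?_, ?_⟩
    · have h3 := Finset.single_le_sum (f := fun i => |A i i| + |q i| / μ₁)
        (fun j _ => add_nonneg (abs_nonneg _) (div_nonneg (abs_nonneg _) h1.le))
        (Finset.mem_univ i)
      linarith
    · have h3 : 0 ≤ ∑ i, (|A i i| + |q i| / μ₁) := Finset.sum_nonneg fun i _ =>
        add_nonneg (abs_nonneg _) (div_nonneg (abs_nonneg _) h1.le)
      linarith
  have hcA : ∀ i, 0 ≤ A i i + c := by
    intro i
    have h3 := hcterm i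
    have h4 : -A i i ≤ |A i i| := neg_le_abs _
    have h5 : (0:ℝ) ≤ |q i| / μ₁ := div_nonneg (abs_nonneg _) h1.le
    linarith
  have hcq : ∀ i, q i / μ₁ ≤ c := by
    intro i
    have h3 := hcterm i
    have h4 : q i / μ₁ ≤ |q i| / μ₁ := by
      gcongr
      exact le_abs_self _
    have h5 : (0:ℝ) ≤ |A i i| := abs_nonneg _
    linarith
  set B := A + c • (1 : Matrix (Fin n) (Fin n) ℝ) with hBdef
  have hB : ∀ i j, 0 ≤ B i j := by
    intro i j
    by_cases hij : i = j
    · subst hij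
      simpa [hBdef, Matrix.add_apply, Matrix.smul_apply, Matrix.one_apply] using hcA i
    · simpa [hBdef, Matrix.add_apply, Matrix.smul_apply, Matrix.one_apply, hij] using
        hA_qp i j hij
  have hBentry : ∀ (v : Fin n → ℝ) (i : Fin n), B.mulVec v i = A.mulVec v i + c * v i := by
    intro v i
    rw [hBdef, Matrix.add_mulVec, Matrix.smul_mulVec, Matrix.one_mulVec]
    simp
  have hBu : ∀ i, B.mulVec u i ≤ (c - q i / μ₁) * u i := by
    intro i
    rw [hBentry]
    have h6 : A.mulVec u i ≤ -(q i) * u i / μ₁ :=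
      (le_div_iff₀ h1).2 (by linarith [hAu i])
    have h7 : -(q i) * u i / μ₁ = -(q i / μ₁ * u i) := by ring
    have h8 : (c - q i / μ₁) * u i = c * u i - q i / μ₁ * u i := by ring
    linarith [h6, h7 ▸ h6]
  have hBx : ∀ i, B.mulVec x i ≤ (c - δ) * x i := by
    intro i
    rw [hBentry]
    have h6 := hAx i
    nlinarith [hx i]
  set θ := μ₁ / μ₂ with hθdef
  have hθ0 : 0 < θ := div_pos h1 h2
  have hθ1 : θ < 1 := (div_lt_one h2).2 h12
  set w := fun i => u i ^ θ * x i ^ (1 - θ) with hwdef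
  have hw : ∀ i, 0 < w i := fun i =>
    mul_pos (Real.rpow_pos_of_pos (hu i) _) (Real.rpow_pos_of_pos (hx i) _)
  have hBw : ∀ i, B.mulVec w i ≤ ((c - q i / μ₁) ^ θ * (c - δ) ^ (1 - θ)) * w i := by
    intro i
    have hh : B.mulVec w i ≤ (B.mulVec u i) ^ θ * (B.mulVec x i) ^ (1 - θ) := by
      have := holder_sum (fun j => B i j) u x (fun j => hB i j) hu hx hθ0 hθ1
      simpa [Matrix.mulVec, dotProduct, hwdef] using this
    have hBu0 : 0 ≤ B.mulVec u i := mulVec_nonneg hB (fun j => (hu j).le) i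
    have hBx0 : 0 ≤ B.mulVec x i := mulVec_nonneg hB (fun j => (hx j).le) i
    have hcqi : 0 ≤ c - q i / μ₁ := by linarith [hcq i]
    have h7 : (B.mulVec u i) ^ θ ≤ ((c - q i / μ₁) * u i) ^ θ :=
      Real.rpow_le_rpow hBu0 (hBu i) hθ0.le
    have h8 : (B.mulVec x i) ^ (1 - θ) ≤ ((c - δ) * x i) ^ (1 - θ) :=
      Real.rpow_le_rpow hBx0 (hBx i) (by linarith)
    have h9 : ((c - q i / μ₁) * u i) ^ θ = (c - q i / μ₁) ^ θ * u i ^ θ :=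
      Real.mul_rpow hcqi (hu i).le
    have h10 : ((c - δ) * x i) ^ (1 - θ) = (c - δ) ^ (1 - θ) * x i ^ (1 - θ) :=
      Real.mul_rpow (by linarith) (hx i).le
    calc B.mulVec w i ≤ (B.mulVec u i) ^ θ * (B.mulVec x i) ^ (1 - θ) := hh
      _ ≤ ((c - q i / μ₁) * u i) ^ θ * ((c - δ) * x i) ^ (1 - θ) :=
          mul_le_mul h7 h8 (Real.rpow_nonneg hBx0 _)
            (Real.rpow_nonneg (mul_nonneg hcqi (hu i).le) _)
      _ = ((c - q i / μ₁) ^ θ * (c - δ) ^ (1 - θ)) * w i := by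
          rw [h9, h10, hwdef]
          ring
  have hM2 : ∀ i, (μ₂ • A + Matrix.diagonal q).mulVec w i ≤ (-(μ₂ * (1 - θ) * δ)) * w i := by
    intro i
    rw [smul_add_diag_mulVec]
    have hyoung : (c - q i / μ₁) ^ θ * (c - δ) ^ (1 - θ)
        ≤ θ * (c - q i / μ₁) + (1 - θ) * (c - δ) :=
      Real.geom_mean_le_arith_mean2_weighted hθ0.le (by linarith)
        (by linarith [hcq i]) (by linarith) (by ring)
    have hAw : A.mulVec w i ≤ (θ * (c - q i / μ₁) + (1 - θ) * (c - δ) - c) * w i := by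
      have h11 : A.mulVec w i = B.mulVec w i - c * w i := by
        have := hBentry w i
        linarith
      have h12' : B.mulVec w i ≤ (θ * (c - q i / μ₁) + (1 - θ) * (c - δ)) * w i :=
        (hBw i).trans (mul_le_mul_of_nonneg_right hyoung (hw i).le)
      have h15 : (θ * (c - q i / μ₁) + (1 - θ) * (c - δ) - c) * w i
          = (θ * (c - q i / μ₁) + (1 - θ) * (c - δ)) * w i - c * w i := by ring
      rw [h11, h15]
      linarith
    have h13 : μ₂ * A.mulVec w i
        ≤ μ₂ * ((θ * (c - q i / μ₁) + (1 - θ) * (c - δ) - c) * w i) :=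
      mul_le_mul_of_nonneg_left hAw h2.le
    have hcoef : μ₂ * (θ * (c - q i / μ₁) + (1 - θ) * (c - δ) - c) + q i
        = -(μ₂ * (1 - θ) * δ) := by
      rw [hθdef]
      field_simp
      ring
    have h14 : μ₂ * ((θ * (c - q i / μ₁) + (1 - θ) * (c - δ) - c) * w i) + q i * w i
        = (μ₂ * (θ * (c - q i / μ₁) + (1 - θ) * (c - δ) - c) + q i) * w i := by ring
    rw [hcoef] at h14
    linarith
  have hfin : specBound (μ₂ • A + Matrix.diagonal q) ≤ -(μ₂ * (1 - θ) * δ) :=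
    specBound_le hn (qp_smul_add_diag hA_qp h2.le q) hw hM2
  have hpos : 0 < μ₂ * (1 - θ) * δ := mul_pos (mul_pos h2 (by linarith)) hδ
  linarith

end PFAux


open PFAux in
/-- For an irreducible quasi-positive matrix `A` with `s(A) < 0` and `Q = diagonal q`:
`μ ↦ s(μA + Q)` is strictly decreasing on `(0,∞)`, tends to `max_i q i` as `μ → 0⁺`,
and tends to `-∞` as `μ → ∞`. -/
theorem stmt12 {n : ℕ} (hn : 0 < n) (A : Matrix (Fin n) (Fin n) ℝ)
    (hA_qp : ∀ i j, i ≠ j → 0 ≤ A i j)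
    (hA_irr : MatIrreducible A)
    (hsA : specBound A < 0)
    (q : Fin n → ℝ) :
    StrictAntiOn (fun μ : ℝ => specBound (μ • A + Matrix.diagonal q)) (Set.Ioi 0) ∧
    Tendsto (fun μ : ℝ => specBound (μ • A + Matrix.diagonal q))
      (nhdsWithin 0 (Set.Ioi 0)) (nhds (⨆ i, q i)) ∧
    Tendsto (fun μ : ℝ => specBound (μ • A + Matrix.diagonal q)) atTop atBot := by
  haveI : NeZero n := ⟨hn.ne'⟩
  obtain ⟨x, hx, hAxeq⟩ := perron_qp hn hA_qp hA_irr
  set δ : ℝ := -specBound A with hδdef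
  have hδ : 0 < δ := by rw [hδdef]; linarith
  have hAx : ∀ i, A.mulVec x i ≤ -δ * x i := by
    intro i
    have := congrFun hAxeq i
    simp only [Pi.smul_apply, smul_eq_mul] at this
    rw [this, hδdef]
    ring_nf
    exact le_refl _
  obtain ⟨i₀, hi₀max⟩ := Finite.exists_max q
  have hmaxq : (⨆ i, q i) = q i₀ :=
    le_antisymm (ciSup_le hi₀max) (le_ciSup (Set.finite_range q).bddAbove i₀)
  -- (a)
  have hanti : StrictAntiOn (fun μ : ℝ => specBound (μ • A + Matrix.diagonal q))
      (Set.Ioi 0) := by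
    intro μ₁ hμ₁ μ₂ hμ₂ h12
    have hμ₁' : 0 < μ₁ := Set.mem_Ioi.1 hμ₁
    set s₁ := specBound (μ₁ • A + Matrix.diagonal q) with hs₁
    have hdiag : Matrix.diagonal (fun i => q i - s₁)
        = Matrix.diagonal q + (-s₁) • (1 : Matrix (Fin n) (Fin n) ℝ) := by
      ext i j
      by_cases h : i = j
      · subst h
        simp [Matrix.diagonal_apply_eq, Matrix.one_apply]
        ring
      · simp [Matrix.diagonal_apply_ne _ h, Matrix.one_apply, h]
    have hshift : ∀ μ : ℝ, μ • A + Matrix.diagonal (fun i => q i - s₁)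
        = (μ • A + Matrix.diagonal q) + (-s₁) • (1 : Matrix (Fin n) (Fin n) ℝ) := by
      intro μ
      rw [hdiag, add_assoc]
    have hsb : ∀ μ : ℝ, specBound (μ • A + Matrix.diagonal (fun i => q i - s₁))
        = specBound (μ • A + Matrix.diagonal q) - s₁ := by
      intro μ
      rw [hshift μ, specBound_shift hn]
      ring
    have h0 : specBound (μ₁ • A + Matrix.diagonal (fun i => q i - s₁)) ≤ 0 := by
      rw [hsb μ₁, ← hs₁]
      simp
    have hlt := key hn hA_qp hA_irr hx hδ hAx (fun i => q i - s₁) hμ₁' h12 h0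
    rw [hsb μ₂] at hlt
    simp only
    linarith
  refine ⟨hanti, ?_, ?_⟩
  -- (b)
  · set R : ℝ := ∑ i, ∑ j, |A i j| with hRdef
    have hR0 : 0 ≤ R := Finset.sum_nonneg fun i _ => Finset.sum_nonneg fun j _ => abs_nonneg _
    have hrow : ∀ i, A.mulVec (fun _ => (1:ℝ)) i ≤ R := by
      intro i
      have h1 : A.mulVec (fun _ => (1:ℝ)) i = ∑ j, A i j := by
        simp [Matrix.mulVec, dotProduct]
      have h2 : ∑ j, A i j ≤ ∑ j, |A i j| :=
        Finset.sum_le_sum fun j _ => le_abs_self _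
      have h3 : ∑ j, |A i j| ≤ R := by
        rw [hRdef]
        exact Finset.single_le_sum (f := fun i => ∑ j, |A i j|)
          (fun k _ => Finset.sum_nonneg fun j _ => abs_nonneg _) (Finset.mem_univ i)
      linarith
    have hupper : ∀ μ : ℝ, 0 < μ →
        specBound (μ • A + Matrix.diagonal q) ≤ q i₀ + μ * R := by
      intro μ hμ
      refine specBound_le hn (qp_smul_add_diag hA_qp hμ.le q)
        (x := fun _ => (1:ℝ)) (fun i => one_pos) ?_
      intro i
      rw [smul_add_diag_mulVec]
      have h1 := hrow i
      have h2 := hi₀max i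
      have h3 : μ * A.mulVec (fun _ => (1:ℝ)) i ≤ μ * R :=
        mul_le_mul_of_nonneg_left h1 hμ.le
      simp only [mul_one]
      linarith
    have hlower : ∀ μ : ℝ, 0 < μ →
        q i₀ + μ * A i₀ i₀ ≤ specBound (μ • A + Matrix.diagonal q) := by
      intro μ hμ
      have h1 := diag_le_specBound hn (qp_smul_add_diag hA_qp hμ.le q)
        (irr_smul_add_diag hA_irr hμ.ne' q) i₀
      have h2 : (μ • A + Matrix.diagonal q) i₀ i₀ = μ * A i₀ i₀ + q i₀ := by
        simp [Matrix.add_apply, Matrix.diagonal_apply_eq]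
      rw [h2] at h1
      linarith
    rw [hmaxq]
    have hg : Tendsto (fun μ : ℝ => q i₀ + μ * A i₀ i₀) (nhdsWithin 0 (Set.Ioi 0))
        (nhds (q i₀)) := by
      have : Tendsto (fun μ : ℝ => q i₀ + μ * A i₀ i₀) (nhds 0)
          (nhds (q i₀ + 0 * A i₀ i₀)) :=
        (continuous_const.add (continuous_id.mul continuous_const)).tendsto 0
      simpa using this.mono_left nhdsWithin_le_nhds
    have hh : Tendsto (fun μ : ℝ => q i₀ + μ * R) (nhdsWithin 0 (Set.Ioi 0))
        (nhds (q i₀)) := by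
      have : Tendsto (fun μ : ℝ => q i₀ + μ * R) (nhds 0) (nhds (q i₀ + 0 * R)) :=
        (continuous_const.add (continuous_id.mul continuous_const)).tendsto 0
      simpa using this.mono_left nhdsWithin_le_nhds
    refine tendsto_of_tendsto_of_tendsto_of_le_of_le' hg hh ?_ ?_
    · exact eventually_nhdsWithin_of_forall fun μ hμ => hlower μ (Set.mem_Ioi.1 hμ)
    · exact eventually_nhdsWithin_of_forall fun μ hμ => hupper μ (Set.mem_Ioi.1 hμ)
  -- (c)
  · have hupper : ∀ μ : ℝ, 0 ≤ μ →
        specBound (μ • A + Matrix.diagonal q) ≤ q i₀ + μ * (-δ) := by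
      intro μ hμ
      refine specBound_le hn (qp_smul_add_diag hA_qp hμ q) hx ?_
      intro i
      rw [smul_add_diag_mulVec]
      have h1 : μ * A.mulVec x i ≤ μ * (-δ * x i) :=
        mul_le_mul_of_nonneg_left (hAx i) hμ
      have h2 : q i * x i ≤ q i₀ * x i :=
        mul_le_mul_of_nonneg_right (hi₀max i) (hx i).le
      have h3 : (q i₀ + μ * (-δ)) * x i = μ * (-δ * x i) + q i₀ * x i := by ring
      linarith
    have hbot : Tendsto (fun μ : ℝ => q i₀ + μ * (-δ)) atTop atBot := by
      apply tendsto_atBot_add_const_left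
      exact Tendsto.atTop_mul_const_of_neg (by linarith : -δ < 0) tendsto_id
    refine tendsto_atBot_mono' atTop ?_ hbot
    filter_upwards [eventually_ge_atTop (0:ℝ)] with μ hμ
    exact hupper μ hμ
end

section
/- Let n ≥ 2 and let A be an irreducible quasi-positive n×n real matrix each of whose columns sums to zero. Let β_j > 0 and γ_j > 0 for all j, let μ_I > 0, and set F = diag(β_1, …, β_n) and V = μ_I A − diag(γ_1, …, γ_n). Then V is invertible, and with R_0 := r(−FV⁻¹) the quantity R_0 − 1 has the same sign as s(μ_I A + diag(β_1 − γ_1, …, β_n − γ_n)); that is, R_0 > 1 if and only if s(μ_I A + diag(β_j − γ_j)) > 0, R_0 = 1 if and only if s(μ_I A + diag(β_j − γ_j)) = 0, and R_0 < 1 if and only if s(μ_I A + diag(β_j − γ_j)) < 0. -/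
open Matrix Filter
open Topology

namespace SIS

variable {n : ℕ}

lemma exists_pos_of_ne {u : Fin n → ℝ} (h0 : ∀ i, 0 ≤ u i) (hne : u ≠ 0) : ∃ i, 0 < u i := by
  by_contra h
  push_neg at h
  exact hne (funext fun i => le_antisymm (h i) (h0 i))

lemma mulVec_nonneg {M : Matrix (Fin n) (Fin n) ℝ} {u : Fin n → ℝ}
    (hM : ∀ i j, 0 ≤ M i j) (hu : ∀ i, 0 ≤ u i) : ∀ i, 0 ≤ M.mulVec u i := fun i => by
  simpa [Matrix.mulVec, dotProduct] using
    Finset.sum_nonneg fun j (_ : j ∈ Finset.univ) => mul_nonneg (hM i j) (hu j)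

lemma mulVec_pos {M : Matrix (Fin n) (Fin n) ℝ} {u : Fin n → ℝ}
    (hM : ∀ i j, 0 < M i j) (hu : ∀ i, 0 ≤ u i) (hne : u ≠ 0) : ∀ i, 0 < M.mulVec u i := by
  obtain ⟨j₀, hj₀⟩ := exists_pos_of_ne hu hne
  intro i
  have h2 : (M.mulVec u) i = ∑ j, M i j * u j := by
    simp [Matrix.mulVec, dotProduct]
  rw [h2]
  have : M i j₀ * u j₀ ≤ ∑ j, M i j * u j :=
    Finset.single_le_sum (f := fun j => M i j * u j)
      (fun j _ => mul_nonneg (hM i j).le (hu j)) (Finset.mem_univ j₀)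
  exact lt_of_lt_of_le (mul_pos (hM i j₀) hj₀) this

lemma powNonneg {M : Matrix (Fin n) (Fin n) ℝ} (hM : ∀ i j, 0 ≤ M i j) (k : ℕ) :
    ∀ i j, 0 ≤ (M ^ k) i j := by
  induction k with
  | zero => intro i j; simp [Matrix.one_apply]; split <;> simp
  | succ k ih =>
    intro i j
    rw [pow_succ', Matrix.mul_apply]
    exact Finset.sum_nonneg fun l _ => mul_nonneg (hM i l) (ih l j)

lemma posPow (hn : 0 < n) {M : Matrix (Fin n) (Fin n) ℝ} (hM : ∀ i j, 0 ≤ M i j)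
    (hd : ∀ i, 0 < M i i) (hirr : MatIrreducible M) : ∀ i j, 0 < (M ^ (n - 1)) i j := by
  intro i j
  -- sets of positivity
  set S : ℕ → Finset (Fin n) := fun k => Finset.univ.filter (fun i => 0 < (M ^ k) i j) with hS
  have hmem : ∀ k i, i ∈ S k ↔ 0 < (M ^ k) i j := by
    intro k i; simp [hS]
  have hbase : j ∈ S 0 := by simp [hS, Matrix.one_apply_eq]
  have hmono : ∀ k, S k ⊆ S (k + 1) := by
    intro k i hi
    rw [hmem] at hi ⊢
    rw [pow_succ', Matrix.mul_apply]
    have h1 : M i i * (M ^ k) i j ≤ ∑ l, M i l * (M ^ k) l j :=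
      Finset.single_le_sum (f := fun l => M i l * (M ^ k) l j)
        (fun l _ => mul_nonneg (hM i l) (powNonneg hM k l j)) (Finset.mem_univ i)
    exact lt_of_lt_of_le (mul_pos (hd i) hi) h1
  have hnej : ∀ k, j ∈ S k := by
    intro k
    induction k with
    | zero => exact hbase
    | succ k ih => exact hmono k ih
  have hgrow : ∀ k, S k = Finset.univ ∨ k + 1 ≤ (S k).card := by
    intro k
    induction k with
    | zero => exact Or.inr (Finset.card_pos.mpr ⟨j, hbase⟩)
    | succ k ih =>
      rcases ih with h | h
      · left
        exact Finset.eq_univ_of_forall fun i => hmono k (h ▸ Finset.mem_univ i)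
      · by_cases hu : S k = Finset.univ
        · left
          exact Finset.eq_univ_of_forall fun i => hmono k (hu ▸ Finset.mem_univ i)
        · right
          obtain ⟨i', hi', j', hj', hij'⟩ := hirr (S k) ⟨j, hnej k⟩ hu
          have hi'new : i' ∈ S (k + 1) := by
            rw [hmem]
            rw [pow_succ', Matrix.mul_apply]
            have hpos : 0 < M i' j' := lt_of_le_of_ne (hM i' j') (Ne.symm hij')
            have h1 : M i' j' * (M ^ k) j' j ≤ ∑ l, M i' l * (M ^ k) l j :=
              Finset.single_le_sum (f := fun l => M i' l * (M ^ k) l j)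
                (fun l _ => mul_nonneg (hM i' l) (powNonneg hM k l j)) (Finset.mem_univ j')
            exact lt_of_lt_of_le (mul_pos hpos ((hmem k j').mp hj')) h1
          have hss : S k ⊂ S (k + 1) := ⟨hmono k, fun hsub => hi' (hsub hi'new)⟩
          calc k + 2 ≤ (S k).card + 1 := by omega
            _ ≤ (S (k + 1)).card := Finset.card_lt_card hss
  have : S (n - 1) = Finset.univ := by
    rcases hgrow (n - 1) with h | h
    · exact h
    · apply Finset.eq_univ_of_card
      have h2 : (S (n - 1)).card ≤ Fintype.card (Fin n) := Finset.card_le_univ _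
      have h4 : Fintype.card (Fin n) = n := Fintype.card_fin n
      have h3 : n - 1 + 1 = n := Nat.succ_pred_eq_of_pos hn
      omega
  exact (hmem (n - 1) i).mp (this ▸ Finset.mem_univ i)




lemma mem_spectrum_iff_eigen (M : Matrix (Fin n) (Fin n) ℂ) (z : ℂ) :
    z ∈ spectrum ℂ M ↔ ∃ x : Fin n → ℂ, x ≠ 0 ∧ M.mulVec x = z • x := by
  rw [spectrum.mem_iff, Algebra.algebraMap_eq_smul_one]
  rw [Matrix.isUnit_iff_isUnit_det, isUnit_iff_ne_zero, not_not,
    ← Matrix.exists_mulVec_eq_zero_iff]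
  constructor
  · rintro ⟨v, hv, hv0⟩
    refine ⟨v, hv, ?_⟩
    rw [Matrix.sub_mulVec, Matrix.smul_mulVec, Matrix.one_mulVec, sub_eq_zero] at hv0
    exact hv0.symm
  · rintro ⟨x, hx, hx0⟩
    refine ⟨x, hx, ?_⟩
    rw [Matrix.sub_mulVec, Matrix.smul_mulVec, Matrix.one_mulVec, sub_eq_zero, hx0]

lemma real_eigen_mem_spectrum {M : Matrix (Fin n) (Fin n) ℝ} {t : ℝ} {u : Fin n → ℝ}
    (hu : u ≠ 0) (h : M.mulVec u = t • u) :
    (t : ℂ) ∈ spectrum ℂ (M.map Complex.ofReal) := by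
  rw [mem_spectrum_iff_eigen]
  refine ⟨fun i => (u i : ℂ), ?_, ?_⟩
  · intro hx
    apply hu
    funext i
    have := congrFun hx i
    simpa using this
  · funext i
    have hre := congrFun h i
    simp only [Matrix.mulVec, dotProduct, Matrix.map_apply, Pi.smul_apply,
      smul_eq_mul] at hre ⊢
    exact_mod_cast hre

lemma feas_intro {M : Matrix (Fin n) (Fin n) ℝ} (hM : ∀ i j, 0 ≤ M i j) {z : ℂ}
    (hz : z ∈ spectrum ℂ (M.map Complex.ofReal)) :
    ∃ u : Fin n → ℝ, (∀ i, 0 ≤ u i) ∧ u ≠ 0 ∧ ∀ i, ‖z‖ * u i ≤ M.mulVec u i := by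
  rw [mem_spectrum_iff_eigen] at hz
  obtain ⟨x, hx, hx0⟩ := hz
  refine ⟨fun i => ‖x i‖, fun i => norm_nonneg _, ?_, ?_⟩
  · intro h0
    apply hx
    funext i
    have := congrFun h0 i
    simpa using this
  · intro i
    have h1 : ‖z‖ * ‖x i‖ = ‖z * x i‖ := (norm_mul _ _).symm
    rw [h1]
    have h2 : z * x i = (M.map Complex.ofReal).mulVec x i := by
      rw [hx0]; simp [smul_eq_mul]
    rw [h2]
    have h3 : (M.map Complex.ofReal).mulVec x i = ∑ j, (M i j : ℂ) * x j := by
      simp [Matrix.mulVec, dotProduct, Matrix.map_apply]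
    rw [h3]
    calc ‖∑ j, (M i j : ℂ) * x j‖ ≤ ∑ j, ‖(M i j : ℂ) * x j‖ :=
          norm_sum_le _ _
      _ = ∑ j, M i j * ‖x j‖ := by
          apply Finset.sum_congr rfl
          intro j _
          rw [norm_mul, Complex.norm_real, Real.norm_eq_abs, abs_of_nonneg (hM i j)]
      _ = M.mulVec (fun j => ‖x j‖) i := by
          simp [Matrix.mulVec, dotProduct]

lemma spectrum_transpose (M : Matrix (Fin n) (Fin n) ℂ) : spectrum ℂ Mᵀ = spectrum ℂ M := by
  ext z
  rw [spectrum.mem_iff, spectrum.mem_iff, not_iff_not, Algebra.algebraMap_eq_smul_one,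
    Matrix.isUnit_iff_isUnit_det, Matrix.isUnit_iff_isUnit_det]
  have : (z • (1 : Matrix (Fin n) (Fin n) ℂ) - Mᵀ) = (z • 1 - M)ᵀ := by
    rw [Matrix.transpose_sub, Matrix.transpose_smul, Matrix.transpose_one]
  rw [this, Matrix.det_transpose]

lemma map_transpose' (M : Matrix (Fin n) (Fin n) ℝ) :
    (Mᵀ).map Complex.ofReal = (M.map Complex.ofReal)ᵀ := rfl





def Feas (M : Matrix (Fin n) (Fin n) ℝ) (t : ℝ) : Prop :=
  ∃ u : Fin n → ℝ, (∀ i, 0 ≤ u i) ∧ u ≠ 0 ∧ ∀ i, t * u i ≤ M.mulVec u i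



lemma onePlusNonneg {M : Matrix (Fin n) (Fin n) ℝ} (hM : ∀ i j, 0 ≤ M i j) :
    ∀ i j, 0 ≤ (1 + M) i j := by
  intro i j
  have : (1 + M) i j = (1 : Matrix (Fin n) (Fin n) ℝ) i j + M i j := rfl
  rw [this, Matrix.one_apply]
  split <;> [linarith [hM i j]; simpa using hM i j]

lemma onePlusDiag {M : Matrix (Fin n) (Fin n) ℝ} (hM : ∀ i j, 0 ≤ M i j) :
    ∀ i, 0 < (1 + M) i i := by
  intro i
  have : (1 + M) i i = (1 : Matrix (Fin n) (Fin n) ℝ) i i + M i i := rfl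
  rw [this, Matrix.one_apply_eq]
  linarith [hM i i]

lemma onePlusIrr {M : Matrix (Fin n) (Fin n) ℝ} (hirr : MatIrreducible M) :
    MatIrreducible (1 + M) := by
  intro S hS hSne
  obtain ⟨i, hi, j, hj, hij⟩ := hirr S hS hSne
  refine ⟨i, hi, j, hj, ?_⟩
  have hne : i ≠ j := fun h => hi (h ▸ hj)
  have : (1 + M) i j = (1 : Matrix (Fin n) (Fin n) ℝ) i j + M i j := rfl
  rw [this, Matrix.one_apply_ne hne, zero_add]
  exact hij

lemma greenPos (hn : 0 < n) {M : Matrix (Fin n) (Fin n) ℝ} (hM : ∀ i j, 0 ≤ M i j)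
    (hirr : MatIrreducible M) : ∀ i j, 0 < ((1 + M) ^ (n - 1)) i j :=
  posPow hn (onePlusNonneg hM) (onePlusDiag hM) (onePlusIrr hirr)

lemma feas_row {M : Matrix (Fin n) (Fin n) ℝ} (hM : ∀ i j, 0 ≤ M i j) {t : ℝ}
    (h : Feas M t) : ∃ i, t ≤ ∑ j, M i j := by
  obtain ⟨u, hu0, hune, hle⟩ := h
  obtain ⟨ip, hip⟩ := exists_pos_of_ne hu0 hune
  have hne : (Finset.univ : Finset (Fin n)).Nonempty := ⟨ip, Finset.mem_univ ip⟩
  obtain ⟨i₀, -, hmax⟩ := Finset.exists_max_image Finset.univ u hne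
  have hmax' : ∀ i, u i ≤ u i₀ := fun i => hmax i (Finset.mem_univ i)
  have hpos : 0 < u i₀ := lt_of_lt_of_le hip (hmax' ip)
  have h1 : t * u i₀ ≤ (∑ j, M i₀ j) * u i₀ := by
    calc t * u i₀ ≤ M.mulVec u i₀ := hle i₀
      _ = ∑ j, M i₀ j * u j := by simp [Matrix.mulVec, dotProduct]
      _ ≤ ∑ j, M i₀ j * u i₀ :=
          Finset.sum_le_sum fun j _ => mul_le_mul_of_nonneg_left (hmax' j) (hM i₀ j)
      _ = (∑ j, M i₀ j) * u i₀ := by rw [Finset.sum_mul]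
  exact ⟨i₀, le_of_mul_le_mul_right h1 hpos⟩

lemma feas_bound {M : Matrix (Fin n) (Fin n) ℝ} (hM : ∀ i j, 0 ≤ M i j) {t : ℝ}
    (h : Feas M t) : t ≤ ∑ i, ∑ j, M i j := by
  obtain ⟨i₀, h2⟩ := feas_row hM h
  refine h2.trans ?_
  exact Finset.single_le_sum (f := fun i => ∑ j, M i j)
    (fun i _ => Finset.sum_nonneg fun j _ => hM i j) (Finset.mem_univ i₀)

lemma feas_of_slack (hn : 0 < n) {M : Matrix (Fin n) (Fin n) ℝ} {c : ℝ} {y z : Fin n → ℝ}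
    (hy0 : ∀ i, 0 ≤ y i) (hyne : y ≠ 0) (hz : ∀ i, 0 < z i)
    (heq : M.mulVec y = c • y + z) : ∃ δ : ℝ, 0 < δ ∧ Feas M (c + δ) := by
  have hnempty : (Finset.univ : Finset (Fin n)).Nonempty := ⟨⟨0, hn⟩, Finset.mem_univ _⟩
  obtain ⟨ip, hip⟩ := exists_pos_of_ne hy0 hyne
  set ymax := Finset.univ.sup' hnempty y with hym
  set zmin := Finset.univ.inf' hnempty z with hzm
  have hymaxpos : 0 < ymax := lt_of_lt_of_le hip (Finset.le_sup' y (Finset.mem_univ ip))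
  have hzminpos : 0 < zmin := (Finset.lt_inf'_iff hnempty).mpr fun i _ => hz i
  refine ⟨zmin / ymax, div_pos hzminpos hymaxpos, y, hy0, hyne, ?_⟩
  intro i
  have h1 : zmin / ymax * y i ≤ zmin := by
    have h2 : y i ≤ ymax := Finset.le_sup' y (Finset.mem_univ i)
    calc zmin / ymax * y i ≤ zmin / ymax * ymax :=
          mul_le_mul_of_nonneg_left h2 (div_pos hzminpos hymaxpos).le
      _ = zmin := div_mul_cancel₀ _ (ne_of_gt hymaxpos)
  have h3 : zmin ≤ z i := Finset.inf'_le z (Finset.mem_univ i)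
  have h4 : M.mulVec y i = c * y i + z i := by rw [heq]; rfl
  rw [h4, add_mul]
  nlinarith [hy0 i]

lemma feas_zero (hn : 0 < n) {M : Matrix (Fin n) (Fin n) ℝ} (hM : ∀ i j, 0 ≤ M i j) :
    Feas M 0 := by
  refine ⟨fun _ => 1, fun _ => zero_le_one, ?_, ?_⟩
  · intro h
    have := congrFun h ⟨0, hn⟩
    simp at this
  · intro i
    simpa using mulVec_nonneg hM (fun _ => zero_le_one) i

lemma CWstrict (hn : 0 < n) {M : Matrix (Fin n) (Fin n) ℝ} (hM : ∀ i j, 0 ≤ M i j)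
    (hirr : MatIrreducible M) {v : Fin n → ℝ} {c : ℝ} (hv0 : ∀ i, 0 ≤ v i) (hvne : v ≠ 0)
    (hle : ∀ i, c * v i ≤ M.mulVec v i) (hne : M.mulVec v ≠ c • v) :
    ∃ δ : ℝ, 0 < δ ∧ Feas M (c + δ) := by
  set G := (1 + M) ^ (n - 1) with hG
  have hGpos : ∀ i j, 0 < G i j := greenPos hn hM hirr
  set w := M.mulVec v - c • v with hw
  have hw0 : ∀ i, 0 ≤ w i := fun i => by
    have : w i = M.mulVec v i - c * v i := rfl
    rw [this]; linarith [hle i]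
  have hwne : w ≠ 0 := fun h => hne (by rwa [sub_eq_zero] at h)
  set z := G.mulVec w with hz
  set y := G.mulVec v with hy
  have hzpos : ∀ i, 0 < z i := mulVec_pos hGpos hw0 hwne
  have hypos : ∀ i, 0 < y i := mulVec_pos hGpos hv0 hvne
  have hcomm : M * G = G * M := by
    have h1 : Commute M (1 + M) := (Commute.one_right M).add_right (Commute.refl M)
    exact (h1.pow_right (n - 1)).eq
  have hkey : M.mulVec y = c • y + z := by
    calc M.mulVec y = (M * G).mulVec v := by rw [hy, Matrix.mulVec_mulVec]
      _ = (G * M).mulVec v := by rw [hcomm]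
      _ = G.mulVec (M.mulVec v) := by rw [Matrix.mulVec_mulVec]
      _ = G.mulVec (c • v + w) := by
            have hcv : c • v + w = M.mulVec v := by rw [hw]; abel
            rw [hcv]
      _ = c • y + z := by rw [Matrix.mulVec_add, Matrix.mulVec_smul, hy, hz]
  have hnempty : (Finset.univ : Finset (Fin n)).Nonempty := ⟨⟨0, hn⟩, Finset.mem_univ _⟩
  set ymax := Finset.univ.sup' hnempty y with hym
  set zmin := Finset.univ.inf' hnempty z with hzm
  have hymaxpos : 0 < ymax := lt_of_lt_of_le (hypos ⟨0, hn⟩) (Finset.le_sup' y (Finset.mem_univ _))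
  have hzminpos : 0 < zmin := (Finset.lt_inf'_iff hnempty).mpr fun i _ => hzpos i
  refine ⟨zmin / ymax, div_pos hzminpos hymaxpos, y, fun i => (hypos i).le, ?_, ?_⟩
  · intro h
    exact absurd (congrFun h ⟨0, hn⟩) (ne_of_gt (hypos ⟨0, hn⟩))
  · intro i
    have h1 : zmin / ymax * y i ≤ zmin := by
      have h2 : y i ≤ ymax := Finset.le_sup' y (Finset.mem_univ i)
      calc zmin / ymax * y i ≤ zmin / ymax * ymax :=
            mul_le_mul_of_nonneg_left h2 (div_pos hzminpos hymaxpos).le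
        _ = zmin := div_mul_cancel₀ _ (ne_of_gt hymaxpos)
    have h3 : zmin ≤ z i := Finset.inf'_le z (Finset.mem_univ i)
    have h4 : M.mulVec y i = c * y i + z i := by rw [hkey]; rfl
    rw [h4, add_mul]
    have := h1.trans h3
    nlinarith [hypos i]

lemma PF (hn : 0 < n) (M : Matrix (Fin n) (Fin n) ℝ) (hM : ∀ i j, 0 ≤ M i j)
    (hirr : MatIrreducible M) :
    ∃ t : ℝ, 0 ≤ t ∧ (∀ s, Feas M s → s ≤ t) ∧
      ∃ u, (∀ i, 0 ≤ u i) ∧ u ≠ 0 ∧ M.mulVec u = t • u := by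
  have hbdd : BddAbove {t | Feas M t} := ⟨∑ i, ∑ j, M i j, fun t ht => feas_bound hM ht⟩
  have hne : {t | Feas M t}.Nonempty := ⟨0, feas_zero hn hM⟩
  set T := {t | Feas M t} with hT
  set t0 := sSup T with ht0
  have ht0nonneg : 0 ≤ t0 := le_csSup hbdd (feas_zero hn hM)
  have hub : ∀ s, Feas M s → s ≤ t0 := fun s hs => le_csSup hbdd hs
  -- approximating sequence
  have hseq : ∀ k : ℕ, ∃ t : ℝ, ∃ u : Fin n → ℝ,
      (t0 - 1 / (k + 1) < t) ∧ t ≤ t0 ∧ (∀ i, 0 ≤ u i) ∧ ‖u‖ = 1 ∧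
      ∀ i, t * u i ≤ M.mulVec u i := by
    intro k
    have hlt : t0 - 1 / (k + 1) < t0 := by
      have : (0 : ℝ) < 1 / (k + 1) := by positivity
      linarith
    obtain ⟨t, htT, htgt⟩ := exists_lt_of_lt_csSup hne hlt
    obtain ⟨u, hu0, hune, hule⟩ := htT
    have hnorm : ‖u‖ ≠ 0 := norm_ne_zero_iff.mpr hune
    have hnormpos : 0 < ‖u‖ := norm_pos_iff.mpr hune
    refine ⟨t, ‖u‖⁻¹ • u, htgt, hub t ⟨u, hu0, hune, hule⟩, ?_, ?_, ?_⟩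
    · intro i
      exact mul_nonneg (inv_nonneg.mpr hnormpos.le) (hu0 i)
    · rw [norm_smul, norm_inv, norm_norm, inv_mul_cancel₀ hnorm]
    · intro i
      have h1 : M.mulVec (‖u‖⁻¹ • u) = ‖u‖⁻¹ • M.mulVec u := Matrix.mulVec_smul _ _ _
      rw [h1]
      have h2 : (‖u‖⁻¹ • u) i = ‖u‖⁻¹ * u i := rfl
      rw [h2]
      have h3 : (‖u‖⁻¹ • M.mulVec u) i = ‖u‖⁻¹ * M.mulVec u i := rfl
      rw [h3]
      calc t * (‖u‖⁻¹ * u i) = ‖u‖⁻¹ * (t * u i) := by ring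
        _ ≤ ‖u‖⁻¹ * M.mulVec u i :=
            mul_le_mul_of_nonneg_left (hule i) (inv_nonneg.mpr hnormpos.le)
  choose ts us hts1 hts2 hus0 husn husle using hseq
  -- compactness
  have hmem : ∀ k, us k ∈ Metric.closedBall (0 : Fin n → ℝ) 1 := fun k => by
    rw [Metric.mem_closedBall, dist_zero_right, husn k]
  obtain ⟨ustar, hustar, φ, hφ, hconv⟩ :=
    (isCompact_closedBall (0 : Fin n → ℝ) 1).tendsto_subseq hmem
  -- t sequence converges to t0
  have htconv : Tendsto ts atTop (𝓝 t0) := by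
    have hlow : Tendsto (fun k : ℕ => t0 - 1 / (k + 1)) atTop (𝓝 t0) := by
      have := tendsto_one_div_add_atTop_nhds_zero_nat (𝕜 := ℝ)
      have h2 := tendsto_const_nhds (x := t0) (f := atTop (α := ℕ)) |>.sub this
      simpa using h2
    exact tendsto_of_tendsto_of_tendsto_of_le_of_le hlow tendsto_const_nhds
      (fun k => (hts1 k).le) hts2
  have htconvφ : Tendsto (ts ∘ φ) atTop (𝓝 t0) := htconv.comp hφ.tendsto_atTop
  -- coordinate limits
  have hcoord : ∀ i, Tendsto (fun k => us (φ k) i) atTop (𝓝 (ustar i)) := fun i =>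
    ((continuous_apply i).tendsto ustar).comp hconv
  have hustar0 : ∀ i, 0 ≤ ustar i := fun i =>
    ge_of_tendsto (hcoord i) (Eventually.of_forall fun k => hus0 (φ k) i)
  have hustarnorm : ‖ustar‖ = 1 := by
    have h1 : Tendsto (fun k => ‖us (φ k)‖) atTop (𝓝 ‖ustar‖) :=
      (continuous_norm.tendsto ustar).comp hconv
    have h2 : Tendsto (fun k => ‖us (φ k)‖) atTop (𝓝 1) := by
      simpa [husn] using tendsto_const_nhds (x := (1 : ℝ)) (f := atTop (α := ℕ))
    exact tendsto_nhds_unique h1 h2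
  have hustarne : ustar ≠ 0 := by
    intro h
    rw [h, norm_zero] at hustarnorm
    norm_num at hustarnorm
  have hfeas : ∀ i, t0 * ustar i ≤ M.mulVec ustar i := by
    intro i
    have hL : Tendsto (fun k => ts (φ k) * us (φ k) i) atTop (𝓝 (t0 * ustar i)) :=
      htconvφ.mul (hcoord i)
    have hR : Tendsto (fun k => M.mulVec (us (φ k)) i) atTop (𝓝 (M.mulVec ustar i)) := by
      have hsum : ∀ v : Fin n → ℝ, M.mulVec v i = ∑ j, M i j * v j := fun v => by
        simp [Matrix.mulVec, dotProduct]
      simp only [hsum]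
      exact tendsto_finset_sum _ fun j _ => (tendsto_const_nhds).mul (hcoord j)
    exact le_of_tendsto_of_tendsto' hL hR fun k => husle (φ k) i
  -- equality via strict improvement
  refine ⟨t0, ht0nonneg, hub, ustar, hustar0, hustarne, ?_⟩
  by_contra hneq
  have hne' : M.mulVec ustar ≠ t0 • ustar := hneq
  obtain ⟨δ, hδ, hfeas'⟩ := CWstrict hn hM hirr hustar0 hustarne hfeas hne'
  have := hub _ hfeas'
  linarith

lemma eigPos (hn : 0 < n) {M : Matrix (Fin n) (Fin n) ℝ} (hM : ∀ i j, 0 ≤ M i j)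
    (hirr : MatIrreducible M) {t : ℝ} (ht : 0 ≤ t) {u : Fin n → ℝ} (hu0 : ∀ i, 0 ≤ u i)
    (hune : u ≠ 0) (heig : M.mulVec u = t • u) : ∀ i, 0 < u i := by
  have hGpos : ∀ i j, 0 < ((1 + M) ^ (n - 1)) i j := greenPos hn hM hirr
  have hpow : ∀ k : ℕ, ((1 + M) ^ k).mulVec u = (1 + t) ^ k • u := by
    intro k
    induction k with
    | zero => simp [Matrix.one_mulVec]
    | succ k ih =>
      calc ((1 + M) ^ (k + 1)).mulVec u = ((1 + M) * (1 + M) ^ k).mulVec u := by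
            rw [← pow_succ']
        _ = (1 + M).mulVec (((1 + M) ^ k).mulVec u) := (Matrix.mulVec_mulVec _ _ _).symm
        _ = (1 + M).mulVec ((1 + t) ^ k • u) := by rw [ih]
        _ = (1 + t) ^ k • (1 + M).mulVec u := Matrix.mulVec_smul _ _ _
        _ = (1 + t) ^ k • ((1 + t) • u) := by
            rw [Matrix.add_mulVec, Matrix.one_mulVec, heig, add_smul, one_smul]
        _ = (1 + t) ^ (k + 1) • u := by rw [smul_smul, ← pow_succ]
  intro i
  have h1 := mulVec_pos hGpos hu0 hune i
  rw [hpow (n - 1)] at h1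
  have h2 : (0 : ℝ) < (1 + t) ^ (n - 1) := by positivity
  have h3 : ((1 + t) ^ (n - 1) • u) i = (1 + t) ^ (n - 1) * u i := rfl
  rw [h3] at h1
  nlinarith






lemma powEig {M : Matrix (Fin n) (Fin n) ℝ} {t : ℝ} {u : Fin n → ℝ}
    (heig : M.mulVec u = t • u) : ∀ m, (M ^ m).mulVec u = t ^ m • u := by
  intro m
  induction m with
  | zero => simp [Matrix.one_mulVec]
  | succ m ih =>
    calc (M ^ (m + 1)).mulVec u = (M * M ^ m).mulVec u := by rw [← pow_succ']
      _ = M.mulVec ((M ^ m).mulVec u) := (Matrix.mulVec_mulVec _ _ _).symm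
      _ = M.mulVec (t ^ m • u) := by rw [ih]
      _ = t ^ m • (t • u) := by rw [Matrix.mulVec_smul, heig]
      _ = t ^ (m + 1) • u := by rw [smul_smul, ← pow_succ]

lemma powBound {M : Matrix (Fin n) (Fin n) ℝ} (hM : ∀ i j, 0 ≤ M i j) {t : ℝ}
    {u : Fin n → ℝ} (hu : ∀ i, 0 < u i) (heig : M.mulVec u = t • u) :
    ∀ m i j, (M ^ m) i j * u j ≤ t ^ m * u i := by
  intro m i j
  have h1 := powEig heig m
  have h2 : (M ^ m).mulVec u i = ∑ l, (M ^ m) i l * u l := by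
    simp [Matrix.mulVec, dotProduct]
  have h3 : (M ^ m) i j * u j ≤ ∑ l, (M ^ m) i l * u l :=
    Finset.single_le_sum (f := fun l => (M ^ m) i l * u l)
      (fun l _ => mul_nonneg (powNonneg hM m i l) (hu l).le) (Finset.mem_univ j)
  calc (M ^ m) i j * u j ≤ ∑ l, (M ^ m) i l * u l := h3
    _ = (M ^ m).mulVec u i := h2.symm
    _ = t ^ m * u i := by rw [h1]; rfl

lemma map_smul_one_sub (P : Matrix (Fin n) (Fin n) ℝ) (c : ℝ) :
    (c • (1 : Matrix (Fin n) (Fin n) ℝ) - P).map Complex.ofReal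
      = (c : ℂ) • 1 - P.map Complex.ofReal := by
  ext i j
  simp only [Matrix.map_apply, Matrix.sub_apply, Matrix.smul_apply, Matrix.one_apply,
    smul_eq_mul]
  split_ifs <;> simp

lemma map_add_smul_one (M : Matrix (Fin n) (Fin n) ℝ) (c : ℝ) :
    (M + c • (1 : Matrix (Fin n) (Fin n) ℝ)).map Complex.ofReal
      = M.map Complex.ofReal + (c : ℂ) • 1 := by
  ext i j
  simp only [Matrix.map_apply, Matrix.add_apply, Matrix.smul_apply, Matrix.one_apply,
    smul_eq_mul]
  split_ifs <;> simp

lemma invPos (hn : 0 < n) {P : Matrix (Fin n) (Fin n) ℝ} {c : ℝ}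
    (hP : ∀ i j, 0 ≤ P i j) (hd : ∀ i, 0 < P i i) (hirr : MatIrreducible P)
    (hcolsum : ∀ j, ∑ i, P i j < c) :
    ∃ Wi : Matrix (Fin n) (Fin n) ℝ,
      Wi * (c • 1 - P) = 1 ∧ (c • 1 - P) * Wi = 1 ∧ (∀ i j, 0 < Wi i j) := by
  have i0 : Fin n := ⟨0, hn⟩
  have hc : 0 < c := lt_of_le_of_lt (Finset.sum_nonneg fun i _ => hP i i0) (hcolsum i0)
  set W := c • (1 : Matrix (Fin n) (Fin n) ℝ) - P with hW
  -- spectrum of P is inside the open disc of radius c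
  have hspec : ∀ z ∈ spectrum ℂ (P.map Complex.ofReal), ‖z‖ < c := by
    intro z hz
    have htr : MatIrreducible Pᵀ := by
      intro S hS hSne
      have hSc : (Sᶜ : Finset (Fin n)).Nonempty := by
        rw [← Finset.card_pos, Finset.card_compl]
        have h1 : S.card < Fintype.card (Fin n) :=
          lt_of_le_of_ne (Finset.card_le_univ S) (by
            intro h; exact hSne (Finset.eq_univ_of_card S (by simpa using h)))
        omega
      have hScne : (Sᶜ : Finset (Fin n)) ≠ Finset.univ := by
        intro h
        obtain ⟨j, hj⟩ := hS
        have hj2 : j ∈ (Sᶜ : Finset (Fin n)) := h ▸ Finset.mem_univ j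
        exact (Finset.mem_compl.mp hj2) hj
      obtain ⟨i, hi, j, hj, hij⟩ := hirr Sᶜ hSc hScne
      refine ⟨j, Finset.mem_compl.mp hj, i, ?_, hij⟩
      · simpa using hi
    have hzT : z ∈ spectrum ℂ ((Pᵀ).map Complex.ofReal) := by
      have h1 : (Pᵀ).map Complex.ofReal = (P.map Complex.ofReal)ᵀ := rfl
      rw [h1, spectrum_transpose]
      exact hz
    have hfeas : Feas Pᵀ (‖z‖) := feas_intro (fun i j => hP j i) hzT
    obtain ⟨i, hib⟩ := feas_row (fun i j => hP j i) hfeas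
    calc ‖z‖ ≤ ∑ j, Pᵀ i j := hib
      _ = ∑ j, P j i := by simp [Matrix.transpose_apply]
      _ < c := hcolsum i
  -- invertibility of W
  have hWmap : W.map Complex.ofReal = (c : ℂ) • 1 - P.map Complex.ofReal :=
    map_smul_one_sub P c
  have hWCunit : IsUnit (W.map Complex.ofReal) := by
    by_contra h
    have hcspec : (c : ℂ) ∈ spectrum ℂ (P.map Complex.ofReal) := by
      rw [spectrum.mem_iff, Algebra.algebraMap_eq_smul_one, ← hWmap]
      exact h
    have := hspec _ hcspec
    rw [Complex.norm_real, Real.norm_eq_abs, abs_of_pos hc] at this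
    exact lt_irrefl c this
  have hWdet : IsUnit W.det := by
    rw [Matrix.isUnit_iff_isUnit_det] at hWCunit
    have h1 : (W.map Complex.ofReal).det = ((W.det : ℝ) : ℂ) := by
      have := RingHom.map_det (Complex.ofRealHom) W
      rw [RingHom.mapMatrix_apply] at this
      exact this.symm
    rw [h1, isUnit_iff_ne_zero] at hWCunit
    rw [isUnit_iff_ne_zero]
    exact fun h => hWCunit (by rw [h, Complex.ofReal_zero])
  set Wi := W⁻¹ with hWi
  have hWl : Wi * W = 1 := Matrix.nonsing_inv_mul W hWdet
  have hWr : W * Wi = 1 := Matrix.mul_nonsing_inv W hWdet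
  -- Perron data for P
  obtain ⟨r, hr0, hrub, u, hu0, hune, hueig⟩ := PF hn P hP hirr
  have hupos : ∀ i, 0 < u i := eigPos hn hP hirr hr0 hu0 hune hueig
  have hrc : r < c := by
    have h1 := real_eigen_mem_spectrum hune hueig
    have h2 := hspec _ h1
    rwa [Complex.norm_real, Real.norm_eq_abs, abs_of_nonneg hr0] at h2
  -- partial sums of the Neumann series
  set Smat : ℕ → Matrix (Fin n) (Fin n) ℝ :=
    fun m => ∑ k ∈ Finset.range m, (c⁻¹) ^ (k + 1) • P ^ k with hSmat
  have hid : ∀ m, W * Smat m = 1 - (c⁻¹) ^ m • P ^ m := by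
    intro m
    induction m with
    | zero => simp [hSmat]
    | succ m ih =>
      have h1 : Smat (m + 1) = Smat m + (c⁻¹) ^ (m + 1) • P ^ m := by
        simp only [hSmat]; exact Finset.sum_range_succ _ _
      rw [h1, mul_add, ih, mul_smul_comm]
      have h2 : W * P ^ m = c • P ^ m - P ^ (m + 1) := by
        rw [hW, sub_mul, Matrix.smul_mul, one_mul, pow_succ']
      rw [h2, smul_sub, smul_smul]
      have h3 : (c⁻¹) ^ (m + 1) * c = (c⁻¹) ^ m := by
        rw [pow_succ]
        field_simp
      rw [h3]
      abel
  have hSW : ∀ m, Smat m = Wi - (c⁻¹) ^ m • (Wi * P ^ m) := by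
    intro m
    have h1 : Wi * (W * Smat m) = Smat m := by rw [← mul_assoc, hWl, one_mul]
    rw [hid m, mul_sub, mul_one, mul_smul_comm] at h1
    exact h1.symm
  have hSnonneg : ∀ m i j, 0 ≤ Smat m i j := by
    intro m i j
    simp only [hSmat]
    have h1 : (∑ k ∈ Finset.range m, (c⁻¹) ^ (k + 1) • P ^ k) i j
        = ∑ k ∈ Finset.range m, (c⁻¹) ^ (k + 1) * (P ^ k) i j := by
      rw [Matrix.sum_apply]
      rfl
    rw [h1]
    exact Finset.sum_nonneg fun k _ =>
      mul_nonneg (pow_nonneg (inv_nonneg.mpr hc.le) _) (powNonneg hP k i j)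
  -- entrywise convergence
  have hWinonneg : ∀ i j, 0 ≤ Wi i j := by
    intro i j
    have htend : Tendsto (fun m => Smat m i j) atTop (𝓝 (Wi i j)) := by
      have hrw : ∀ m, Smat m i j = Wi i j - (c⁻¹) ^ m * (Wi * P ^ m) i j := by
        intro m
        rw [hSW m]
        rfl
      simp only [hrw]
      have hzero : Tendsto (fun m => (c⁻¹) ^ m * (Wi * P ^ m) i j) atTop (𝓝 0) := by
        refine squeeze_zero_norm
          (a := fun m => ((∑ l, |Wi i l| * u l) / u j) * (r / c) ^ m) ?_ ?_
        · intro m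
          have hb : |(Wi * P ^ m) i j| ≤ ∑ l, |Wi i l| * ((P ^ m) l j) := by
            rw [Matrix.mul_apply]
            calc |∑ l, Wi i l * (P ^ m) l j| ≤ ∑ l, |Wi i l * (P ^ m) l j| :=
                  Finset.abs_sum_le_sum_abs _ _
              _ = ∑ l, |Wi i l| * ((P ^ m) l j) := by
                  apply Finset.sum_congr rfl
                  intro l _
                  rw [abs_mul, abs_of_nonneg (powNonneg hP m l j)]
          have hb2 : ∀ l, (P ^ m) l j ≤ r ^ m * u l / u j := fun l =>
            (le_div_iff₀ (hupos j)).mpr (powBound hP hupos hueig m l j)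
          have hb3 : ∑ l, |Wi i l| * ((P ^ m) l j) ≤ ∑ l, |Wi i l| * (r ^ m * u l / u j) :=
            Finset.sum_le_sum fun l _ => mul_le_mul_of_nonneg_left (hb2 l) (abs_nonneg _)
          have heq : ∑ l, |Wi i l| * (r ^ m * u l / u j)
              = ((∑ l, |Wi i l| * u l) / u j) * r ^ m := by
            rw [Finset.sum_div, Finset.sum_mul]
            apply Finset.sum_congr rfl
            intro l _
            ring
          have hnorm : ‖(c⁻¹) ^ m * (Wi * P ^ m) i j‖
              = (c⁻¹) ^ m * |(Wi * P ^ m) i j| := by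
            rw [Real.norm_eq_abs, abs_mul, abs_of_nonneg (pow_nonneg (inv_nonneg.mpr hc.le) m)]
          rw [hnorm]
          calc (c⁻¹) ^ m * |(Wi * P ^ m) i j|
              ≤ (c⁻¹) ^ m * (((∑ l, |Wi i l| * u l) / u j) * r ^ m) := by
                apply mul_le_mul_of_nonneg_left _ (pow_nonneg (inv_nonneg.mpr hc.le) m)
                exact hb.trans (hb3.trans_eq heq)
            _ = ((∑ l, |Wi i l| * u l) / u j) * (r / c) ^ m := by
                rw [div_pow, inv_pow]
                ring
        · have h1 : Tendsto (fun m : ℕ => (r / c) ^ m) atTop (𝓝 0) :=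
            tendsto_pow_atTop_nhds_zero_of_lt_one (div_nonneg hr0 hc.le)
              ((div_lt_one hc).mpr hrc)
          simpa using h1.const_mul ((∑ l, |Wi i l| * u l) / u j)
      have h2 : Tendsto (fun m => Wi i j - (c⁻¹) ^ m * (Wi * P ^ m) i j) atTop
          (𝓝 (Wi i j)) := by
        simpa using (tendsto_const_nhds (x := Wi i j) (f := atTop (α := ℕ))).sub hzero
      exact h2
    exact ge_of_tendsto htend (Eventually.of_forall fun m => hSnonneg m i j)
  -- strict positivity
  refine ⟨Wi, hWl, hWr, ?_⟩
  intro i j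
  have hn1 : n - 1 + 1 = n := Nat.succ_pred_eq_of_pos hn
  have hterm : (c⁻¹) ^ n * (P ^ (n - 1)) i j ≤ Smat n i j := by
    have h1 : Smat n i j = ∑ k ∈ Finset.range n, (c⁻¹) ^ (k + 1) * (P ^ k) i j := by
      simp only [hSmat]
      rw [Matrix.sum_apply]
      rfl
    rw [h1]
    have h2 : (c⁻¹) ^ (n - 1 + 1) * (P ^ (n - 1)) i j
        ≤ ∑ k ∈ Finset.range n, (c⁻¹) ^ (k + 1) * (P ^ k) i j :=
      Finset.single_le_sum (f := fun k => (c⁻¹) ^ (k + 1) * (P ^ k) i j)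
        (fun k _ => mul_nonneg (pow_nonneg (inv_nonneg.mpr hc.le) _) (powNonneg hP k i j))
        (Finset.mem_range.mpr (by omega))
    rwa [hn1] at h2
  have hpos : 0 < (c⁻¹) ^ n * (P ^ (n - 1)) i j :=
    mul_pos (pow_pos (inv_pos.mpr hc) n) (posPow hn hP hd hirr i j)
  have hrem : 0 ≤ (c⁻¹) ^ n * (Wi * P ^ n) i j := by
    apply mul_nonneg (pow_nonneg (inv_nonneg.mpr hc.le) n)
    rw [Matrix.mul_apply]
    exact Finset.sum_nonneg fun l _ => mul_nonneg (hWinonneg i l) (powNonneg hP n l j)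
  have hWieq : Wi i j = Smat n i j + (c⁻¹) ^ n * (Wi * P ^ n) i j := by
    have h1 := hSW n
    have h2 := congrFun (congrFun h1 i) j
    have h3 : Smat n i j = Wi i j - (c⁻¹) ^ n * (Wi * P ^ n) i j := h2
    linarith
  linarith


end SIS

/-- For the `n`-patch SIS model with `F = diag β`, `V = μ_I A - diag γ`: `V` is invertible,
and `R₀ = r(-F V⁻¹)` satisfies `R₀ - 1` has the same sign as
`s(μ_I A + diag (β - γ))`. -/
theorem stmt17 {n : ℕ} (hn : 2 ≤ n) (A : Matrix (Fin n) (Fin n) ℝ)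
    (hA_qp : ∀ i j, i ≠ j → 0 ≤ A i j)
    (hA_irr : MatIrreducible A)
    (hcol : ∀ j, ∑ i, A i j = 0)
    (β γ : Fin n → ℝ) (hβ : ∀ j, 0 < β j) (hγ : ∀ j, 0 < γ j)
    (μI : ℝ) (hμI : 0 < μI) :
    IsUnit (μI • A - Matrix.diagonal γ) ∧
    (1 < specRad (-(Matrix.diagonal β * (μI • A - Matrix.diagonal γ)⁻¹)) ↔
      0 < specBound (μI • A + Matrix.diagonal (fun j => β j - γ j))) ∧
    (specRad (-(Matrix.diagonal β * (μI • A - Matrix.diagonal γ)⁻¹)) = 1 ↔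
      specBound (μI • A + Matrix.diagonal (fun j => β j - γ j)) = 0) ∧
    (specRad (-(Matrix.diagonal β * (μI • A - Matrix.diagonal γ)⁻¹)) < 1 ↔
      specBound (μI • A + Matrix.diagonal (fun j => β j - γ j)) < 0) := by
  have hn0 : 0 < n := by omega
  have hnempty : (Finset.univ : Finset (Fin n)).Nonempty := ⟨⟨0, hn0⟩, Finset.mem_univ _⟩
  classical
  have hirrM : ∀ (M : Matrix (Fin n) (Fin n) ℝ), (∀ i j, i ≠ j → M i j = μI * A i j) →
      MatIrreducible M := by
    intro M hoff S hS hSne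
    obtain ⟨i, hi, j, hj, hij⟩ := hA_irr S hS hSne
    have hne : i ≠ j := fun h => hi (h ▸ hj)
    exact ⟨i, hi, j, hj, by rw [hoff i j hne]; exact mul_ne_zero (ne_of_gt hμI) hij⟩
  set F : Matrix (Fin n) (Fin n) ℝ := Matrix.diagonal β with hFdef
  set B : Matrix (Fin n) (Fin n) ℝ := μI • A + Matrix.diagonal (fun j => β j - γ j) with hBdef
  set W : Matrix (Fin n) (Fin n) ℝ := Matrix.diagonal γ - μI • A with hWdef
  have hBFW : B = F - W := by
    rw [hBdef, hFdef, hWdef]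
    ext i j
    by_cases h : i = j
    · subst h
      simp [Matrix.add_apply, Matrix.sub_apply, Matrix.smul_apply, Matrix.diagonal_apply_eq,
        smul_eq_mul]
      ring
    · simp [Matrix.add_apply, Matrix.sub_apply, Matrix.smul_apply,
        Matrix.diagonal_apply_ne _ h, smul_eq_mul]
  set c₁ : ℝ := 1 + Finset.univ.sup' hnempty (fun j => γ j - μI * A j j) with hc₁
  set c₂ : ℝ := 1 + Finset.univ.sup' hnempty (fun j => γ j - β j - μI * A j j) with hc₂
  set P₁ : Matrix (Fin n) (Fin n) ℝ := c₁ • 1 - W with hP₁def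
  set Q : Matrix (Fin n) (Fin n) ℝ := B + c₂ • 1 with hQdef
  have hP₁e : ∀ i j, P₁ i j = (if i = j then c₁ - γ j else 0) + μI * A i j := by
    intro i j
    by_cases h : i = j
    · subst h
      simp [hP₁def, hWdef, Matrix.sub_apply, Matrix.smul_apply, Matrix.one_apply_eq,
        Matrix.diagonal_apply_eq, smul_eq_mul]
      ring
    · simp [hP₁def, hWdef, Matrix.sub_apply, Matrix.smul_apply, Matrix.one_apply_ne h,
        Matrix.diagonal_apply_ne _ h, h, smul_eq_mul]
  have hQe : ∀ i j, Q i j = (if i = j then c₂ + (β j - γ j) else 0) + μI * A i j := by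
    intro i j
    by_cases h : i = j
    · subst h
      simp [hQdef, hBdef, Matrix.add_apply, Matrix.smul_apply, Matrix.one_apply_eq,
        Matrix.diagonal_apply_eq, smul_eq_mul]
      ring
    · simp [hQdef, hBdef, Matrix.add_apply, Matrix.smul_apply, Matrix.one_apply_ne h,
        Matrix.diagonal_apply_ne _ h, h, smul_eq_mul]
  have hsup1 : ∀ j, γ j - μI * A j j ≤ Finset.univ.sup' hnempty (fun j => γ j - μI * A j j) :=
    fun j => Finset.le_sup' (f := fun j => γ j - μI * A j j) (Finset.mem_univ j)
  have hsup2 : ∀ j, γ j - β j - μI * A j j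
      ≤ Finset.univ.sup' hnempty (fun j => γ j - β j - μI * A j j) :=
    fun j => Finset.le_sup' (f := fun j => γ j - β j - μI * A j j) (Finset.mem_univ j)
  have hP₁diag : ∀ i, 0 < P₁ i i := by
    intro i
    rw [hP₁e i i, if_pos rfl]
    have := hsup1 i
    rw [hc₁]
    linarith
  have hP₁0 : ∀ i j, 0 ≤ P₁ i j := by
    intro i j
    by_cases h : i = j
    · subst h; exact (hP₁diag i).le
    · rw [hP₁e i j, if_neg h, zero_add]
      exact mul_nonneg hμI.le (hA_qp i j h)
  have hP₁irr : MatIrreducible P₁ :=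
    hirrM P₁ (fun i j hne => by rw [hP₁e i j, if_neg hne, zero_add])
  have hP₁col : ∀ j, ∑ i, P₁ i j = c₁ - γ j := by
    intro j
    rw [Finset.sum_congr rfl (fun i _ => hP₁e i j), Finset.sum_add_distrib]
    have h1 : ∑ i, (if i = j then c₁ - γ j else 0) = c₁ - γ j := by simp
    have h2 : ∑ i, μI * A i j = 0 := by rw [← Finset.mul_sum, hcol j, mul_zero]
    rw [h1, h2, add_zero]
  have hcolP₁lt : ∀ j, ∑ i, P₁ i j < c₁ := fun j => by
    rw [hP₁col j]; linarith [hγ j]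
  have hQdiag : ∀ i, 0 < Q i i := by
    intro i
    rw [hQe i i, if_pos rfl]
    have := hsup2 i
    rw [hc₂]
    linarith
  have hQ0 : ∀ i j, 0 ≤ Q i j := by
    intro i j
    by_cases h : i = j
    · subst h; exact (hQdiag i).le
    · rw [hQe i j, if_neg h, zero_add]
      exact mul_nonneg hμI.le (hA_qp i j h)
  have hQirr : MatIrreducible Q :=
    hirrM Q (fun i j hne => by rw [hQe i j, if_neg hne, zero_add])
  -- inverse of W
  obtain ⟨Wi, hWiW, hWWi, hWipos⟩ := SIS.invPos hn0 hP₁0 hP₁diag hP₁irr hcolP₁lt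
  have hWPid : c₁ • (1 : Matrix (Fin n) (Fin n) ℝ) - P₁ = W := by
    rw [hP₁def]; exact sub_sub_cancel _ _
  rw [hWPid] at hWiW hWWi
  -- the next-generation matrix
  set N : Matrix (Fin n) (Fin n) ℝ := F * Wi with hNdef
  have hNe : ∀ i j, N i j = β i * Wi i j := by
    intro i j
    rw [hNdef, hFdef, Matrix.diagonal_mul]
  have hNpos : ∀ i j, 0 < N i j := fun i j => by
    rw [hNe]; exact mul_pos (hβ i) (hWipos i j)
  have hN0 : ∀ i j, 0 ≤ N i j := fun i j => (hNpos i j).le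
  have hNirr : MatIrreducible N := by
    intro S hS hSne
    obtain ⟨j, hj⟩ := hS
    have : ∃ i, i ∉ S := by
      by_contra h
      push_neg at h
      exact hSne (Finset.eq_univ_of_forall h)
    obtain ⟨i, hi⟩ := this
    exact ⟨i, hi, j, hj, ne_of_gt (hNpos i j)⟩
  -- Perron data
  obtain ⟨tQ, htQ0, hubQ, uQ, huQ0, huQne, huQeig⟩ := SIS.PF hn0 Q hQ0 hQirr
  obtain ⟨tN, htN0, hubN, uN, huN0, huNne, huNeig⟩ := SIS.PF hn0 N hN0 hNirr
  have hQB : ∀ v : Fin n → ℝ, Q.mulVec v = B.mulVec v + c₂ • v := by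
    intro v
    rw [hQdef, Matrix.add_mulVec, Matrix.smul_mulVec, Matrix.one_mulVec]
  have hBuQ : B.mulVec uQ = (tQ - c₂) • uQ := by
    have h1 := hQB uQ
    rw [huQeig] at h1
    have h2 : B.mulVec uQ = tQ • uQ - c₂ • uQ := by
      rw [h1]; abel
    rw [h2, ← sub_smul]
  -- spectral identities
  have hsB : specBound B = tQ - c₂ := by
    apply IsGreatest.csSup_eq
    constructor
    · exact ⟨((tQ - c₂ : ℝ) : ℂ), SIS.real_eigen_mem_spectrum huQne hBuQ, Complex.ofReal_re _⟩
    · rintro x ⟨z, hz, rfl⟩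
      obtain ⟨xv, hxne, hxeig⟩ := (SIS.mem_spectrum_iff_eigen _ _).mp hz
      have hQc : (Q.map Complex.ofReal) = B.map Complex.ofReal + (c₂ : ℂ) • 1 := by
        rw [hQdef]; exact SIS.map_add_smul_one B c₂
      have hQeigC : (Q.map Complex.ofReal).mulVec xv = (z + c₂) • xv := by
        rw [hQc, Matrix.add_mulVec, Matrix.smul_mulVec, Matrix.one_mulVec, hxeig,
          ← add_smul]
      have hzQ : (z + c₂) ∈ spectrum ℂ (Q.map Complex.ofReal) :=
        (SIS.mem_spectrum_iff_eigen _ _).mpr ⟨xv, hxne, hQeigC⟩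
      have h1 : ‖z + c₂‖ ≤ tQ := by
        obtain ⟨u, hu0, hune, hule⟩ := SIS.feas_intro hQ0 hzQ
        exact hubQ _ ⟨u, hu0, hune, hule⟩
      have h2 : (z + (c₂ : ℂ)).re ≤ ‖z + c₂‖ := Complex.re_le_norm _
      have h3 : (z + (c₂ : ℂ)).re = z.re + c₂ := by simp
      linarith
  have hsN : specRad N = tN := by
    apply IsGreatest.csSup_eq
    constructor
    · refine ⟨((tN : ℝ) : ℂ), SIS.real_eigen_mem_spectrum huNne huNeig, ?_⟩
      simp [Complex.norm_real, Real.norm_eq_abs, abs_of_nonneg htN0]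
    · rintro x ⟨z, hz, rfl⟩
      obtain ⟨u, hu0, hune, hule⟩ := SIS.feas_intro hN0 hz
      exact hubN _ ⟨u, hu0, hune, hule⟩
  -- key implication 1
  have key1 : c₂ < tQ → 1 < tN := by
    intro hlt
    set s : ℝ := tQ - c₂ with hs
    have hspos : 0 < s := by rw [hs]; linarith
    have hcol' : ∀ j, ∑ i, P₁ i j < c₁ + s := fun j =>
      lt_of_lt_of_le (hcolP₁lt j) (by linarith)
    obtain ⟨Wsi, hWsiW, hWWsi, hWsipos⟩ := SIS.invPos hn0 hP₁0 hP₁diag hP₁irr hcol'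
    have hWs_id : (c₁ + s) • (1 : Matrix (Fin n) (Fin n) ℝ) - P₁ = W + s • 1 := by
      rw [hP₁def, add_smul]; abel
    rw [hWs_id] at hWsiW hWWsi
    have hFuQ : F.mulVec uQ = (W + s • 1).mulVec uQ := by
      have h1 : B.mulVec uQ = F.mulVec uQ - W.mulVec uQ := by
        rw [hBFW, Matrix.sub_mulVec]
      have h2 := hBuQ
      rw [h1] at h2
      rw [Matrix.add_mulVec, Matrix.smul_mulVec, Matrix.one_mulVec]
      rw [sub_eq_iff_eq_add] at h2
      rw [h2]; abel
    set u' : Fin n → ℝ := F.mulVec uQ with hu'def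
    have hu'0 : ∀ i, 0 ≤ u' i := by
      intro i
      rw [hu'def, hFdef, Matrix.mulVec_diagonal]
      exact mul_nonneg (hβ i).le (huQ0 i)
    obtain ⟨ip, hip⟩ := SIS.exists_pos_of_ne huQ0 huQne
    have hu'ne : u' ≠ 0 := by
      intro h
      have h1 := congrFun h ip
      rw [hu'def, hFdef, Matrix.mulVec_diagonal] at h1
      have : 0 < β ip * uQ ip := mul_pos (hβ ip) hip
      rw [h1] at this
      exact lt_irrefl 0 this
    have hWid : Wi = Wsi + s • (Wi * Wsi) := by
      have h1 : Wi * (W + s • 1) * Wsi = Wi := by rw [mul_assoc, hWWsi, mul_one]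
      have h2 : Wi * W * Wsi = Wsi := by rw [hWiW, one_mul]
      have h3 : Wi * (W + s • 1) * Wsi - Wi * W * Wsi = s • (Wi * Wsi) := by
        rw [← sub_mul, ← mul_sub]
        have h4 : (W + s • 1) - W = s • (1 : Matrix (Fin n) (Fin n) ℝ) := by abel
        rw [h4, mul_smul_comm, mul_one, smul_mul_assoc]
      rw [h1, h2] at h3
      rw [← h3]; abel
    have hWsiu' : Wsi.mulVec u' = uQ := by
      rw [hFuQ, Matrix.mulVec_mulVec, hWsiW, Matrix.one_mulVec]
    have hWiu' : Wi.mulVec u' = uQ + s • Wi.mulVec uQ := by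
      nth_rewrite 1 [hWid]
      rw [Matrix.add_mulVec, Matrix.smul_mulVec, ← Matrix.mulVec_mulVec, hWsiu']
    have hNu' : N.mulVec u' = (1 : ℝ) • u' + s • F.mulVec (Wi.mulVec uQ) := by
      rw [hNdef, ← Matrix.mulVec_mulVec, hWiu', Matrix.mulVec_add, Matrix.mulVec_smul,
        one_smul]
    have hzpos : ∀ i, 0 < (s • F.mulVec (Wi.mulVec uQ)) i := by
      intro i
      have h1 : ∀ i, 0 < Wi.mulVec uQ i := SIS.mulVec_pos hWipos huQ0 huQne
      have h2 : F.mulVec (Wi.mulVec uQ) i = β i * Wi.mulVec uQ i := by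
        rw [hFdef, Matrix.mulVec_diagonal]
      have h3 : (s • F.mulVec (Wi.mulVec uQ)) i = s * F.mulVec (Wi.mulVec uQ) i := rfl
      rw [h3, h2]
      exact mul_pos hspos (mul_pos (hβ i) (h1 i))
    obtain ⟨δ, hδpos, hfeas⟩ := SIS.feas_of_slack hn0 hu'0 hu'ne hzpos hNu'
    have := hubN _ hfeas
    linarith
  -- common data for keys 2 and 3
  have hv := SIS.mulVec_pos hWipos huN0 huNne
  set v : Fin n → ℝ := Wi.mulVec uN with hvdef
  have hWv : W.mulVec v = uN := by
    rw [hvdef, Matrix.mulVec_mulVec, hWWi, Matrix.one_mulVec]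
  have hFv : F.mulVec v = tN • uN := by
    rw [hvdef, Matrix.mulVec_mulVec, ← hNdef, huNeig]
  have hBv : B.mulVec v = (tN - 1) • uN := by
    rw [hBFW, Matrix.sub_mulVec, hFv, hWv, sub_smul, one_smul]
  have hQv : Q.mulVec v = c₂ • v + (tN - 1) • uN := by
    rw [hQB v, hBv]; abel
  have hvne : v ≠ 0 := by
    intro h
    have := congrFun h ⟨0, hn0⟩
    exact absurd this (ne_of_gt (hv ⟨0, hn0⟩))
  have hQvle : 1 ≤ tN → ∀ i, c₂ * v i ≤ Q.mulVec v i := by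
    intro hge i
    have he : Q.mulVec v i = c₂ * v i + (tN - 1) * uN i := by
      rw [hQv]; rfl
    have : (0 : ℝ) ≤ (tN - 1) * uN i := mul_nonneg (by linarith) (huN0 i)
    rw [he]
    linarith
  -- key implication 3
  have key3 : tQ < c₂ → tN < 1 := by
    intro hlt
    by_contra hge
    push_neg at hge
    have hfeas : SIS.Feas Q c₂ := ⟨v, fun i => (hv i).le, hvne, hQvle hge⟩
    have := hubQ _ hfeas
    linarith
  -- key implication 2
  have key2 : tQ = c₂ → tN = 1 := by
    intro heqc
    have hge : 1 ≤ tN := by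
      have hBuQ0 : B.mulVec uQ = 0 := by
        rw [hBuQ, heqc, sub_self, zero_smul]
      have hFW : F.mulVec uQ = W.mulVec uQ := by
        have h1 : B.mulVec uQ = F.mulVec uQ - W.mulVec uQ := by
          rw [hBFW, Matrix.sub_mulVec]
        rw [hBuQ0] at h1
        exact sub_eq_zero.mp h1.symm
      have h2 : N.mulVec (F.mulVec uQ) = F.mulVec uQ := by
        calc N.mulVec (F.mulVec uQ) = (F * Wi).mulVec (W.mulVec uQ) := by rw [hNdef, hFW]
          _ = F.mulVec (Wi.mulVec (W.mulVec uQ)) := by rw [← Matrix.mulVec_mulVec]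
          _ = F.mulVec ((Wi * W).mulVec uQ) := by rw [Matrix.mulVec_mulVec uQ Wi W]
          _ = F.mulVec uQ := by rw [hWiW, Matrix.one_mulVec]
      have hu'0 : ∀ i, 0 ≤ F.mulVec uQ i := fun i => by
        rw [hFdef, Matrix.mulVec_diagonal]
        exact mul_nonneg (hβ i).le (huQ0 i)
      obtain ⟨ip, hip⟩ := SIS.exists_pos_of_ne huQ0 huQne
      have hu'ne : F.mulVec uQ ≠ 0 := by
        intro h
        have h1 := congrFun h ip
        rw [hFdef, Matrix.mulVec_diagonal] at h1
        exact absurd h1 (ne_of_gt (mul_pos (hβ ip) hip))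
      have hfeas : SIS.Feas N 1 :=
        ⟨F.mulVec uQ, hu'0, hu'ne, fun i => le_of_eq (by rw [h2, one_mul])⟩
      exact hubN _ hfeas
    have hle : tN ≤ 1 := by
      by_contra hgt
      push_neg at hgt
      have hne2 : Q.mulVec v ≠ c₂ • v := by
        intro h
        rw [hQv] at h
        have h1 : (tN - 1) • uN = 0 := by
          have := congrArg (fun w => w - c₂ • v) h
          simpa using this
        have h2 : tN - 1 ≠ 0 := by intro h3; rw [sub_eq_zero] at h3; linarith
        exact huNne (by
          have := smul_eq_zero.mp h1
          rcases this with h4 | h4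
          · exact absurd h4 h2
          · exact h4)
      obtain ⟨δ, hδpos, hfeas⟩ := SIS.CWstrict hn0 hQ0 hQirr (fun i => (hv i).le) hvne
        (hQvle hgt.le) hne2
      have := hubQ _ hfeas
      rw [heqc] at this
      linarith
    linarith
  -- packaging
  have hVW : μI • A - Matrix.diagonal γ = -W := by rw [hWdef, neg_sub]
  have hUnit : IsUnit (μI • A - Matrix.diagonal γ) := by
    rw [hVW]
    exact ⟨⟨-W, -Wi, by rw [neg_mul_neg, hWWi], by rw [neg_mul_neg, hWiW]⟩, rfl⟩
  have hinv : (μI • A - Matrix.diagonal γ)⁻¹ = -Wi := by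
    apply Matrix.inv_eq_right_inv
    rw [hVW, neg_mul_neg, hWWi]
  have hNexpr : -(F * (μI • A - Matrix.diagonal γ)⁻¹) = N := by
    rw [hinv, Matrix.mul_neg, neg_neg, hNdef]
  have e1 : 1 < tN ↔ c₂ < tQ := by
    constructor
    · intro h
      rcases lt_trichotomy tQ c₂ with h' | h' | h'
      · exact absurd h (by have := key3 h'; linarith)
      · exact absurd h (by have := key2 h'; linarith)
      · exact h'
    · exact key1
  have e2 : tN = 1 ↔ tQ = c₂ := by
    constructor
    · intro h
      rcases lt_trichotomy tQ c₂ with h' | h' | h'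
      · exact absurd h (by have := key3 h'; linarith)
      · exact h'
      · exact absurd h (by have := key1 h'; linarith)
    · exact key2
  have e3 : tN < 1 ↔ tQ < c₂ := by
    constructor
    · intro h
      rcases lt_trichotomy tQ c₂ with h' | h' | h'
      · exact h'
      · exact absurd h (by have := key2 h'; linarith)
      · exact absurd h (by have := key1 h'; linarith)
    · exact key3
  refine ⟨hUnit, ?_, ?_, ?_⟩
  · rw [hNexpr, hsN, hsB]
    rw [e1]
    constructor <;> intro h <;> linarith
  · rw [hNexpr, hsN, hsB]
    rw [e2]
    constructor <;> intro h <;> [linarith; linarith]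
  · rw [hNexpr, hsN, hsB]
    rw [e3]
    constructor <;> intro h <;> linarith
end

section
/- Let n ≥ 2, let a_ij ≥ 0 for all i ≠ j, let ε_i ≥ 0 for all i, and let μ > 0. Assume the n×n matrix A with off-diagonal entries a_ij (i ≠ j) and diagonal entries a_ii = −Σ_{j≠i} a_ji is irreducible. For each i let f_i : ℝ → ℝ be continuous and strictly decreasing on [0, ∞) with f_i(0) < 0. Let u : [0, ∞) → ℝⁿ be differentiable with u_i(t) ≥ 0 for all i and all t ≥ 0, satisfying for every t ≥ 0 and every i: u_i'(t) = u_i(t) f_i(u_i(t)) + μ Σ_{j≠i} (a_ij u_j(t) − a_ji u_i(t)) − μ ε_i u_i(t). Then u_i(t) → 0 as t → ∞ for every i. -/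
open Matrix Filter

theorem sum_erase_comm {n : ℕ} (F : Fin n → Fin n → ℝ) :
    ∑ i, ∑ j ∈ Finset.univ.erase i, F i j = ∑ j, ∑ i ∈ Finset.univ.erase j, F i j := by
  simp only [← Finset.filter_ne', Finset.sum_filter]
  rw [Finset.sum_comm]
  refine Finset.sum_congr rfl fun j _ => Finset.sum_congr rfl fun i _ => ?_
  simp only [ne_comm]

/-- Extinction in the `n`-patch single-species model when every patch growth rate
satisfies `f i 0 < 0`: every nonnegative solution of
`u_i' = u_i f_i(u_i) + μ ∑_{j≠i} (a_ij u_j - a_ji u_i) - μ ε_i u_i`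
tends to `0` in every patch. -/
theorem stmt19 {n : ℕ} (hn : 2 ≤ n)
    (a : Fin n → Fin n → ℝ)
    (ha_off : ∀ i j, i ≠ j → 0 ≤ a i j)
    (ha_diag : ∀ i, a i i = -∑ j ∈ Finset.univ.erase i, a j i)
    (ha_irr : MatIrreducible (Matrix.of a))
    (ε : Fin n → ℝ) (hε : ∀ i, 0 ≤ ε i)
    (μ : ℝ) (hμ : 0 < μ)
    (f : Fin n → ℝ → ℝ)
    (hf_cont : ∀ i, ContinuousOn (f i) (Set.Ici 0))
    (hf_anti : ∀ i, StrictAntiOn (f i) (Set.Ici 0))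
    (hf0 : ∀ i, f i 0 < 0)
    (u : ℝ → Fin n → ℝ)
    (hu_nonneg : ∀ t : ℝ, 0 ≤ t → ∀ i, 0 ≤ u t i)
    (hu_ode : ∀ t : ℝ, 0 ≤ t → ∀ i, HasDerivAt (fun s => u s i)
      (u t i * f i (u t i)
        + μ * ∑ j ∈ Finset.univ.erase i, (a i j * u t j - a j i * u t i)
        - μ * ε i * u t i) t) :
    ∀ i, Tendsto (fun t => u t i) atTop (nhds 0) := by
  have hnpos : 0 < n := by omega
  haveI : Nonempty (Fin n) := Fin.pos_iff_nonempty.mp hnpos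
  set M : ℝ := Finset.univ.sup' Finset.univ_nonempty (fun i => f i 0) with hMdef
  have hMmax : ∀ i, f i 0 ≤ M := fun i =>
    Finset.le_sup' (fun i => f i 0) (Finset.mem_univ i)
  have hMneg : M < 0 :=
    (Finset.sup'_lt_iff Finset.univ_nonempty).mpr fun i _ => hf0 i
  set V : ℝ → ℝ := fun t => ∑ i, u t i with hVdef
  set D : ℝ → ℝ := fun t => ∑ i, (u t i * f i (u t i)
        + μ * ∑ j ∈ Finset.univ.erase i, (a i j * u t j - a j i * u t i)
        - μ * ε i * u t i) with hDdef
  have hVder : ∀ t, 0 ≤ t → HasDerivAt V (D t) t := fun t ht =>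
    HasDerivAt.fun_sum (fun i _ => hu_ode t ht i)
  have hDle : ∀ t, 0 ≤ t → D t ≤ M * V t := by
    intro t ht
    have h1 : ∑ i, ∑ j ∈ Finset.univ.erase i, (a i j * u t j - a j i * u t i) = 0 := by
      simp only [Finset.sum_sub_distrib]
      rw [sub_eq_zero, sum_erase_comm (fun i j => a i j * u t j)]
    have h2 : ∀ i : Fin n, u t i * f i (u t i) ≤ M * u t i := by
      intro i
      have hu0 : (0:ℝ) ≤ u t i := hu_nonneg t ht i
      have hfle : f i (u t i) ≤ M :=
        le_trans ((hf_anti i).antitoneOn Set.self_mem_Ici hu0 hu0) (hMmax i)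
      calc u t i * f i (u t i) ≤ u t i * M := mul_le_mul_of_nonneg_left hfle hu0
        _ = M * u t i := mul_comm _ _
    have h3 : (0:ℝ) ≤ ∑ i, μ * ε i * u t i :=
      Finset.sum_nonneg fun i _ =>
        mul_nonneg (mul_nonneg hμ.le (hε i)) (hu_nonneg t ht i)
    have h4 : ∑ i, u t i * f i (u t i) ≤ M * V t := by
      rw [hVdef, Finset.mul_sum]
      exact Finset.sum_le_sum fun i _ => h2 i
    calc D t = ∑ i, u t i * f i (u t i)
          + μ * ∑ i, ∑ j ∈ Finset.univ.erase i, (a i j * u t j - a j i * u t i)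
          - ∑ i, μ * ε i * u t i := by
            rw [hDdef, Finset.mul_sum]
            simp only [Finset.sum_add_distrib, Finset.sum_sub_distrib]
      _ = ∑ i, u t i * f i (u t i) - ∑ i, μ * ε i * u t i := by rw [h1]; ring
      _ ≤ M * V t := by linarith
  set N : ℝ := -M with hNdef
  set g : ℝ → ℝ := fun t => V t * Real.exp (N * t) with hgdef
  have hgder : ∀ t, 0 ≤ t →
      HasDerivAt g ((D t + N * V t) * Real.exp (N * t)) t := by
    intro t ht
    have he := ((hasDerivAt_id t).const_mul N).exp
    have := (hVder t ht).fun_mul he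
    simp only [id_eq, mul_one] at this
    refine this.congr_deriv ?_
    ring
  have hanti : AntitoneOn g (Set.Ici 0) := by
    apply antitoneOn_of_deriv_nonpos (convex_Ici 0)
    · intro t ht
      exact (hgder t ht).continuousAt.continuousWithinAt
    · intro t ht
      rw [interior_Ici] at ht
      exact (hgder t (le_of_lt ht)).differentiableAt.differentiableWithinAt
    · intro t ht
      rw [interior_Ici] at ht
      rw [(hgder t ht.le).deriv]
      have hd := hDle t ht.le
      have hnp : D t + N * V t ≤ 0 := by
        rw [hNdef, neg_mul]
        linarith
      exact mul_nonpos_of_nonpos_of_nonneg hnp (Real.exp_pos _).le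
  have hVle : ∀ t, 0 ≤ t → V t ≤ V 0 * Real.exp (M * t) := by
    intro t ht
    have hg : V t * Real.exp (N * t) ≤ V 0 := by
      have := hanti Set.self_mem_Ici ht ht
      simpa [hgdef] using this
    have e1 : Real.exp (N * t) * Real.exp (M * t) = 1 := by
      rw [← Real.exp_add]
      have : N * t + M * t = 0 := by rw [hNdef]; ring
      rw [this, Real.exp_zero]
    calc V t = V t * Real.exp (N * t) * Real.exp (M * t) := by
          rw [mul_assoc, e1, mul_one]
      _ ≤ V 0 * Real.exp (M * t) :=
          mul_le_mul_of_nonneg_right hg (Real.exp_pos _).le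
  intro i
  apply squeeze_zero' (g := fun t => V 0 * Real.exp (M * t))
  · filter_upwards [eventually_ge_atTop (0:ℝ)] with t ht
    exact hu_nonneg t ht i
  · filter_upwards [eventually_ge_atTop (0:ℝ)] with t ht
    calc u t i ≤ V t :=
          Finset.single_le_sum (fun j _ => hu_nonneg t ht j) (Finset.mem_univ i)
      _ ≤ V 0 * Real.exp (M * t) := hVle t ht
  · have h1 : Tendsto (fun t : ℝ => M * t) atTop atBot :=
      (tendsto_const_mul_atBot_of_neg hMneg).mpr tendsto_id
    have h2 := Real.tendsto_exp_atBot.comp h1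
    have h3 := h2.const_mul (V 0)
    simpa [Function.comp] using h3
end
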